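/- Let A be a first-order alternating automaton, α = a₁…aₙ an input event sequence, Υ(α) its acceptance formula and Θ̂(α) the formula obtained from Υ(α) by eliminating path quantifiers. For every valuation ν of the time-stamped input variables X^{(≤n)}: if there exists an interpretation I with I, ν ⊨ Θ̂(α), then there exists an interpretation J ⊆ I (pointwise inclusion on each predicate) such that J, ν ⊨ Υ(α). -/

import Mathlib

set_option maxHeartbeats 1000000
set_option autoImplicit false

open scoped Classical

noncomputable section

namespace FOADA

/-! ### Terms over a data domain `D` (all function symbols have a fixed interpretation) -/

inductive Term (D : Type) (V : Type) : Type where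
  | var : V → Term D V
  | app : {n : ℕ} → ((Fin n → D) → D) → (Fin n → Term D V) → Term D V

namespace Term

variable {D V W : Type}

def eval (ν : V → D) : Term D V → D
  | var v => ν v
  | app f ts => f fun i => (ts i).eval ν

def rename (f : V → W) : Term D V → Term D W
  | var v => var (f v)
  | app g ts => app g fun i => (ts i).rename f

def subst (σ : V → Term D W) : Term D V → Term D W
  | var v => σ v
  | app g ts => app g fun i => (ts i).subst σ

def vars : Term D V → Set V
  | var v => {v}
  | app _ ts => ⋃ i, (ts i).vars

def const (d : D) : Term D V := app (n := 0) (fun _ => d) Fin.elim0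

end Term

/-! ### Interpretations, configurations and cubes -/

def Interp (D Q : Type) (ar : Q → ℕ) : Type := ∀ q : Q, Set (Fin (ar q) → D)

def Interp.le {D Q : Type} {ar : Q → ℕ} (I J : Interp D Q ar) : Prop := ∀ q, I q ⊆ J q

/-- Configurations `q(d₁,…,d_{#q})`. -/
def Config (D Q : Type) (ar : Q → ℕ) : Type := Σ q : Q, Fin (ar q) → D

/-- The cube of an interpretation. -/
def Interp.cube {D Q : Type} {ar : Q → ℕ} (I : Interp D Q ar) : Set (Config D Q ar) :=
  {c | c.2 ∈ I c.1}

/-! ### First-order formulas with uninterpreted predicate symbols -/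

inductive Fml (D Q : Type) (ar : Q → ℕ) : Type → Type 1 where
  | eq : {V : Type} → Term D V → Term D V → Fml D Q ar V
  | pred : {V : Type} → (q : Q) → (Fin (ar q) → Term D V) → Fml D Q ar V
  | not : {V : Type} → Fml D Q ar V → Fml D Q ar V
  | and : {V : Type} → Fml D Q ar V → Fml D Q ar V → Fml D Q ar V
  | ex : {V : Type} → Fml D Q ar (Option V) → Fml D Q ar V

namespace Fml

variable {D Q : Type} {ar : Q → ℕ}

/-- The satisfaction relation `I, ν ⊨ φ`. -/
def Sat (I : Interp D Q ar) : {V : Type} → Fml D Q ar V → (V → D) → Prop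
  | _, .eq t s, ν => t.eval ν = s.eval ν
  | _, .pred q ts, ν => (fun i => (ts i).eval ν) ∈ I q
  | _, .not φ, ν => ¬ Sat I φ ν
  | _, .and φ ψ, ν => Sat I φ ν ∧ Sat I ψ ν
  | _, .ex φ, ν => ∃ d : D, Sat I φ fun o => o.elim d ν

def tt [Nonempty D] {V : Type} : Fml D Q ar V :=
  .eq (Term.const (Classical.arbitrary D)) (Term.const (Classical.arbitrary D))

def ff [Nonempty D] {V : Type} : Fml D Q ar V := .not tt

def or {V : Type} (φ ψ : Fml D Q ar V) : Fml D Q ar V := .not (.and (.not φ) (.not ψ))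

def imp {V : Type} (φ ψ : Fml D Q ar V) : Fml D Q ar V := .not (.and φ (.not ψ))

def all {V : Type} (φ : Fml D Q ar (Option V)) : Fml D Q ar V := .not (.ex (.not φ))

def conj [Nonempty D] {V : Type} : List (Fml D Q ar V) → Fml D Q ar V
  | [] => tt
  | φ :: l => .and φ (conj l)

def disj [Nonempty D] {V : Type} : List (Fml D Q ar V) → Fml D Q ar V
  | [] => ff
  | φ :: l => or φ (disj l)

def rename : {V W : Type} → (V → W) → Fml D Q ar V → Fml D Q ar W
  | _, _, f, .eq t s => .eq (t.rename f) (s.rename f)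
  | _, _, f, .pred q ts => .pred q fun i => (ts i).rename f
  | _, _, f, .not φ => .not (rename f φ)
  | _, _, f, .and φ ψ => .and (rename f φ) (rename f ψ)
  | _, _, f, .ex φ => .ex (rename (Option.map f) φ)

def substVar : {V W : Type} → (V → Term D W) → Fml D Q ar V → Fml D Q ar W
  | _, _, σ, .eq t s => .eq (t.subst σ) (s.subst σ)
  | _, _, σ, .pred q ts => .pred q fun i => (ts i).subst σ
  | _, _, σ, .not φ => .not (substVar σ φ)
  | _, _, σ, .and φ ψ => .and (substVar σ φ) (substVar σ ψ)
  | _, _, σ, .ex φ =>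
      .ex (substVar (fun o => Option.elim o (.var none) fun v => (σ v).rename some) φ)

/-- Existential quantification of a block of variables. -/
def exN : {V : Type} → {k : ℕ} → Fml D Q ar (V ⊕ Fin k) → Fml D Q ar V
  | _, 0, φ => φ.rename (Sum.elim id Fin.elim0)
  | _, k + 1, φ =>
      exN (k := k) (.ex (φ.rename fun v =>
        match v with
        | Sum.inl v => some (Sum.inl v)
        | Sum.inr j => Fin.lastCases none (fun i => some (Sum.inr i)) j))

/-- Universal quantification of a block of variables. -/
def allN {V : Type} {k : ℕ} (φ : Fml D Q ar (V ⊕ Fin k)) : Fml D Q ar V :=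
  .not (exN (.not φ))

/-- `Polarity φ b` : every predicate occurrence in `φ` has polarity `b`
(`b = true` : under an even number of negations). -/
def Polarity : {V : Type} → Fml D Q ar V → Bool → Prop
  | _, .eq _ _, _ => True
  | _, .pred _ _, b => b = true
  | _, .not φ, b => Polarity φ (!b)
  | _, .and φ ψ, b => Polarity φ b ∧ Polarity ψ b
  | _, .ex φ, b => Polarity φ b

/-- A formula is positive if every predicate symbol occurs under an even number of negations. -/
def Positive {V : Type} (φ : Fml D Q ar V) : Prop := φ.Polarity true

/-- Free variables of a formula. -/
def fv : {V : Type} → Fml D Q ar V → Set V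
  | _, .eq t s => t.vars ∪ s.vars
  | _, .pred _ ts => ⋃ i, (ts i).vars
  | _, .not φ => fv φ
  | _, .and φ ψ => fv φ ∪ fv ψ
  | _, .ex φ => {v | some v ∈ fv φ}

/-- Predicate symbols occurring in a formula. -/
def preds : {V : Type} → Fml D Q ar V → Set Q
  | _, .eq _ _ => ∅
  | _, .pred q _ => {q}
  | _, .not φ => preds φ
  | _, .and φ ψ => preds φ ∪ preds ψ
  | _, .ex φ => preds φ

/-- Predicate symbols occurring with polarity `b` (`true` = even number of negations). -/
def predsPol : Bool → {V : Type} → Fml D Q ar V → Set Q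
  | _, _, .eq _ _ => ∅
  | b, _, .pred q _ => if b then {q} else ∅
  | b, _, .not φ => predsPol (!b) φ
  | b, _, .and φ ψ => predsPol b φ ∪ predsPol b ψ
  | b, _, .ex φ => predsPol b φ

/-- Number of predicate atom occurrences. -/
def atomCount : {V : Type} → Fml D Q ar V → ℕ
  | _, .eq _ _ => 0
  | _, .pred _ _ => 1
  | _, .not φ => atomCount φ
  | _, .and φ ψ => atomCount φ + atomCount ψ
  | _, .ex φ => atomCount φ

/-- No predicate atom with symbol `q0` occurs. -/
def noPredOcc (q0 : Q) : {V : Type} → Fml D Q ar V → Prop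
  | _, .eq _ _ => True
  | _, .pred q _ => q ≠ q0
  | _, .not φ => noPredOcc q0 φ
  | _, .and φ ψ => noPredOcc q0 φ ∧ noPredOcc q0 ψ
  | _, .ex φ => noPredOcc q0 φ

/-- The size of a formula. -/
def size : {V : Type} → Fml D Q ar V → ℕ
  | _, .eq _ _ => 1
  | _, .pred _ _ => 1
  | _, .not φ => size φ + 1
  | _, .and φ ψ => size φ + size ψ + 1
  | _, .ex φ => size φ + 1

/-- The dual of a (positive) formula. -/
def dual : {V : Type} → Fml D Q ar V → Fml D Q ar V
  | _, .eq t s => .not (.eq t s)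
  | _, .pred q ts => .pred q ts
  | _, .not φ => .not (dual φ)
  | _, .and φ ψ => or (dual φ) (dual ψ)
  | _, .ex φ => .not (.ex (.not (dual φ)))

/-- Map predicate symbols along an arity-preserving function. -/
def mapPred {Q' : Type} {ar' : Q' → ℕ} (f : Q → Q') (h : ∀ q, ar' (f q) = ar q) :
    {V : Type} → Fml D Q ar V → Fml D Q' ar' V
  | _, .eq t s => .eq t s
  | _, .pred q ts => .pred (f q) fun i => ts (Fin.cast (h q) i)
  | _, .not φ => .not (mapPred f h φ)
  | _, .and φ ψ => .and (mapPred f h φ) (mapPred f h ψ)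
  | _, .ex φ => .ex (mapPred f h φ)

/-- Substitute, for every predicate atom `q(t̄)`, the formula `σ q` with parameters
instantiated by `t̄` (plus a fixed set `V0` of "global" variables embedded by `ρ`). -/
def substPred {Q' : Type} {ar' : Q' → ℕ} {V0 : Type}
    (σ : ∀ q : Q, Fml D Q' ar' (V0 ⊕ Fin (ar q))) :
    {V : Type} → (V0 → V) → Fml D Q ar V → Fml D Q' ar' V
  | _, _, .eq t s => .eq t s
  | _, ρ, .pred q ts => (σ q).substVar (Sum.elim (fun v0 => .var (ρ v0)) fun i => ts i)
  | _, ρ, .not φ => .not (substPred σ ρ φ)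
  | _, ρ, .and φ ψ => .and (substPred σ ρ φ) (substPred σ ρ ψ)
  | _, ρ, .ex φ => .ex (substPred σ (fun v0 => some (ρ v0)) φ)

/-- Replace, in place, every atom of the single predicate `q0` by the instance of `ψ`;
all other predicate atoms are kept. -/
def replaceP [DecidableEq Q] (q0 : Q) {V0 : Type} (ψ : Fml D Q ar (V0 ⊕ Fin (ar q0))) :
    {V : Type} → (V0 → V) → Fml D Q ar V → Fml D Q ar V
  | _, _, .eq t s => .eq t s
  | _, ρ, .pred q ts =>
      if h : q = q0 then
        ψ.substVar (Sum.elim (fun v0 => .var (ρ v0))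
          fun i => ts (Fin.cast (congrArg ar h.symm) i))
      else .pred q ts
  | _, ρ, .not φ => .not (replaceP q0 ψ ρ φ)
  | _, ρ, .and φ ψ' => .and (replaceP q0 ψ ρ φ) (replaceP q0 ψ ρ ψ')
  | _, ρ, .ex φ => .ex (replaceP q0 ψ (fun v0 => some (ρ v0)) φ)

end Fml

/-- Minimal models of a formula under a valuation. -/
def MinModels {D Q : Type} {ar : Q → ℕ} {V : Type} (φ : Fml D Q ar V) (ν : V → D) :
    Set (Interp D Q ar) :=
  {I | φ.Sat I ν ∧ ∀ J : Interp D Q ar, φ.Sat J ν → J.le I → J = I}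


/-! ### Polarity lemmas (used to discharge positivity side conditions) -/

namespace Fml

variable {D Q : Type} {ar : Q → ℕ}

theorem polarity_tt [Nonempty D] {V : Type} (_b : Bool) : (tt : Fml D Q ar V).Polarity _b :=
  trivial

theorem polarity_ff [Nonempty D] {V : Type} (_b : Bool) : (ff : Fml D Q ar V).Polarity _b :=
  trivial

theorem polarity_or {V : Type} {φ ψ : Fml D Q ar V} {b : Bool}
    (h1 : φ.Polarity b) (h2 : ψ.Polarity b) : (or φ ψ).Polarity b := by
  simpa [or, Polarity, Bool.not_not] using And.intro h1 h2

theorem polarity_conj [Nonempty D] {V : Type} :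
    ∀ (l : List (Fml D Q ar V)) (b : Bool), (∀ φ ∈ l, φ.Polarity b) → (conj l).Polarity b
  | [], _, _ => trivial
  | φ :: l, b, h =>
      ⟨h φ (List.mem_cons_self),
        polarity_conj l b fun ψ hψ => h ψ (List.mem_cons_of_mem _ hψ)⟩

theorem polarity_disj [Nonempty D] {V : Type} :
    ∀ (l : List (Fml D Q ar V)) (b : Bool), (∀ φ ∈ l, φ.Polarity b) → (disj l).Polarity b
  | [], _, _ => trivial
  | φ :: l, b, h =>
      polarity_or (h φ (List.mem_cons_self))
        (polarity_disj l b fun ψ hψ => h ψ (List.mem_cons_of_mem _ hψ))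

theorem polarity_rename :
    ∀ {V W : Type} (f : V → W) (φ : Fml D Q ar V) (b : Bool),
      φ.Polarity b → (φ.rename f).Polarity b
  | _, _, _, .eq _ _, _, _ => trivial
  | _, _, _, .pred _ _, _, hb => hb
  | _, _, f, .not φ, b, hb => polarity_rename f φ (!b) hb
  | _, _, f, .and φ ψ, b, hb =>
      ⟨polarity_rename f φ b hb.1, polarity_rename f ψ b hb.2⟩
  | _, _, f, .ex φ, b, hb => polarity_rename (Option.map f) φ b hb

theorem polarity_mapPred {Q' : Type} {ar' : Q' → ℕ} (f : Q → Q') (h : ∀ q, ar' (f q) = ar q) :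
    ∀ {V : Type} (φ : Fml D Q ar V) (b : Bool), φ.Polarity b → (φ.mapPred f h).Polarity b
  | _, .eq _ _, _, _ => trivial
  | _, .pred _ _, _, hb => hb
  | _, .not φ, b, hb => polarity_mapPred f h φ (!b) hb
  | _, .and φ ψ, b, hb =>
      ⟨polarity_mapPred f h φ b hb.1, polarity_mapPred f h ψ b hb.2⟩
  | _, .ex φ, b, hb => polarity_mapPred f h φ b hb

theorem polarity_dual :
    ∀ {V : Type} (φ : Fml D Q ar V) (b : Bool), φ.Polarity b → (φ.dual).Polarity b
  | _, .eq _ _, _, _ => trivial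
  | _, .pred _ _, _, hb => hb
  | _, .not φ, b, hb => polarity_dual φ (!b) hb
  | _, .and φ ψ, b, hb => by
      have h1 := polarity_dual φ b hb.1
      have h2 := polarity_dual ψ b hb.2
      simpa [dual, or, Polarity, Bool.not_not] using And.intro h1 h2
  | _, .ex φ, b, hb => by
      have h := polarity_dual φ b hb
      simpa [dual, Polarity, Bool.not_not] using h

end Fml

/-! ### First-order alternating automata -/

/-- Data words over input events `Sig` and input variables `X`. -/
abbrev DWord (Sig X D : Type) := List (Sig × (X → D))

/-- A first-order alternating automaton `A = ⟨Σ, X, Q, ι, F, Δ⟩`.  The (finitely many)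
control predicates are the inhabitants of `Q`, enumerated by `QList`; there is exactly one
transition rule `q(y₁,…,y_{#q}) →^{a(X)} δ q a` per pair `(q,a)` (several rules can be
joined by disjunction, a missing rule is an unsatisfiable one). -/
structure FOAA (Sig X D : Type) : Type 1 where
  Q : Type
  QList : List Q
  QList_mem : ∀ q : Q, q ∈ QList
  ar : Q → ℕ
  init : Fml D Q ar Empty
  init_pos : init.Positive
  F : Set Q
  delta : (q : Q) → Sig → Fml D Q ar (X ⊕ Fin (ar q))
  delta_pos : ∀ q a, (delta q a).Positive

namespace FOAA

variable {Sig X D : Type} (A : FOAA Sig X D)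

abbrev Cfg := Config D A.Q A.ar

/-- An execution of `A` over the data word `w`, starting with the cube `c`, represented as
the (prefix-closed) set of its paths of configurations.  The children of each node at
level `j < |w|` form a cube of a minimal model of the corresponding transition formula. -/
structure IsExec (w : DWord Sig X D) (c : Set A.Cfg) (T : Set (List A.Cfg)) : Prop where
  not_nil : [] ∉ T
  prefix_closed : ∀ p ∈ T, ∀ p' : List A.Cfg, p' ≠ [] → p' <+: p → p' ∈ T
  roots : {cf : A.Cfg | [cf] ∈ T} = c
  depth : ∀ p ∈ T, p.length ≤ w.length + 1
  children : ∀ (p : List A.Cfg) (q : A.Q) (d : Fin (A.ar q) → D),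
    p ++ [⟨q, d⟩] ∈ T → ∀ hl : p.length < w.length,
    ∃ I ∈ MinModels (A.delta q (w.get ⟨p.length, hl⟩).1)
        (Sum.elim (w.get ⟨p.length, hl⟩).2 d),
      {cf : A.Cfg | (p ++ [⟨q, d⟩]) ++ [cf] ∈ T} = I.cube

/-- An accepting execution: all paths have length `|w|` and the frontier is labeled with
final configurations. -/
structure IsAccExec (w : DWord Sig X D) (c : Set A.Cfg) (T : Set (List A.Cfg))
    extends A.IsExec w c T : Prop where
  total : ∀ p ∈ T, p.length ≤ w.length → ∃ cf : A.Cfg, p ++ [cf] ∈ T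
  final : ∀ (p : List A.Cfg) (q : A.Q) (d : Fin (A.ar q) → D),
    p ++ [⟨q, d⟩] ∈ T → p.length = w.length → q ∈ A.F

/-- `A` accepts `w` iff it has an accepting execution over `w` starting with a cube of a
minimal model of the initial sentence. -/
def Accepts (w : DWord Sig X D) : Prop :=
  ∃ I ∈ MinModels A.init (fun v : Empty => v.elim),
    ∃ T : Set (List A.Cfg), A.IsAccExec w I.cube T

def Lang : Set (DWord Sig X D) := {w | A.Accepts w}

end FOAA

/-! ### Time-stamping and path formulas -/

/-- Time-stamping of predicate symbols : `φ⁽ⁱ⁾`. -/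
def stampF {D Q : Type} {ar : Q → ℕ} (i : ℕ) :
    {V : Type} → Fml D Q ar V → Fml D (ℕ × Q) (fun p => ar p.2) V
  | _, .eq t s => .eq t s
  | _, .pred q ts => .pred (i, q) ts
  | _, .not φ => .not (stampF i φ)
  | _, .and φ ψ => .and (stampF i φ) (stampF i ψ)
  | _, .ex φ => .ex (stampF i φ)

/-- The valuation `w_D` of the time-stamped input variables `x⁽ⁱ⁾ ↦ νᵢ(x)`. -/
def wD {Sig X D : Type} [Nonempty D] (w : DWord Sig X D) : (ℕ × X) → D := fun p =>
  if h : 1 ≤ p.1 ∧ p.1 - 1 < w.length then (w.get ⟨p.1 - 1, h.2⟩).2 p.2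
  else Classical.arbitrary D

namespace FOAA

variable {Sig X D : Type} (A : FOAA Sig X D)

/-- The time-stamped right-hand side `ψ⁽ⁱ⁾` of the transition rule for `(q, a)`. -/
def ruleF (i : ℕ) (q : A.Q) (a : Sig) :
    Fml D (ℕ × A.Q) (fun p => A.ar p.2) ((ℕ × X) ⊕ Fin (A.ar q)) :=
  (stampF i (A.delta q a)).rename (Sum.map (fun x => (i, x)) id)

/-- `⋀_{q(ȳ) →^{a(X)} ψ ∈ Δ} ∀ȳ. q⁽ᵏ⁾(ȳ) → ψ⁽ᵏ⁺¹⁾`. -/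
def stepFml [Nonempty D] (k : ℕ) (a : Sig) :
    Fml D (ℕ × A.Q) (fun p => A.ar p.2) (ℕ × X) :=
  Fml.conj <| A.QList.map fun q =>
    Fml.allN (Fml.imp (.pred (k, q) fun i => .var (Sum.inr i)) (A.ruleF (k + 1) q a))

/-- `⋀_{q ∈ Q∖F} ∀ȳ. q⁽ⁿ⁾(ȳ) → ⊥`. -/
def finalFml [Nonempty D] (n : ℕ) : Fml D (ℕ × A.Q) (fun p => A.ar p.2) (ℕ × X) :=
  Fml.conj <| A.QList.map fun q =>
    if q ∈ A.F then Fml.tt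
    else Fml.allN (Fml.imp (.pred (n, q) fun i => .var (Sum.inr i)) Fml.ff)

/-- The path formula `Θ(α)`. -/
def theta [Nonempty D] (α : List Sig) : Fml D (ℕ × A.Q) (fun p => A.ar p.2) (ℕ × X) :=
  .and ((stampF 0 A.init).rename fun v : Empty => v.elim)
    (Fml.conj <| (List.finRange α.length).map fun j => A.stepFml j.val (α.get j))

/-- The acceptance formula `Υ(α)`. -/
def upsilon [Nonempty D] (α : List Sig) : Fml D (ℕ × A.Q) (fun p => A.ar p.2) (ℕ × X) :=
  .and (A.theta α) (A.finalFml α.length)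

/-- The interpretation `I_T` of the time-stamped predicates associated with an execution
(represented by its set of paths). -/
def execInterp (T : Set (List A.Cfg)) : Interp D (ℕ × A.Q) (fun p => A.ar p.2) :=
  fun p => {d | ∃ pf : List A.Cfg, pf.length = p.1 ∧ pf ++ [⟨p.2, d⟩] ∈ T}

end FOAA

/-! ### Predicate-free acceptance formulas `Φ̂(α)` -/

namespace FOAA

variable {Sig X D : Type} (A : FOAA Sig X D)

/-- `Φ̂ₙ(αᵢ)` for `i = α.length` : obtained from `ι⁽⁰⁾` by repeatedly substituting, for every
predicate atom `q⁽ⁱ⁻¹⁾(t̄)`, the formula `ψ⁽ⁱ⁾[t̄/ȳ]` of the corresponding transition rule.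
Since all predicate atoms of the `i`-th formula carry the stamp `i`, the stamps of
predicates are kept implicit. -/
def phiHatN [Nonempty D] (α : List Sig) : Fml D A.Q A.ar (ℕ × X) :=
  (List.finRange α.length).foldl
    (fun acc j =>
      Fml.substPred
        (fun q => (A.delta q (α.get j)).rename (Sum.map (fun x => (j.val + 1, x)) id))
        id acc)
    (A.init.rename fun v : Empty => v.elim)

/-- `Φ̂(α)` : additionally replace every remaining atom `q⁽ⁿ⁾(t̄)` by `⊥` if `q ∉ F` and by
`⊤` if `q ∈ F`.  The result contains no predicate symbols. -/
def phiHat [Nonempty D] (α : List Sig) :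
    Fml D Empty (fun e => e.elim) (ℕ × X) :=
  Fml.substPred (fun q => if q ∈ A.F then Fml.tt else Fml.ff) id (A.phiHatN α)

end FOAA

/-- The unique interpretation over an empty set of predicate symbols. -/
def emptyInterp (D : Type) : Interp D Empty (fun e => e.elim) := fun q => q.elim

/-! ### Size, intersection and complementation of automata -/

namespace FOAA

variable {Sig X D : Type}

/-- `|A| = |ι| + Σ_{rules} |ψ|`. -/
def size [Fintype Sig] (A : FOAA Sig X D) : ℕ :=
  A.init.size + (A.QList.map fun q => ∑ a : Sig, (A.delta q a).size).sum

/-- The intersection automaton `A∩` (disjointness of the predicate sets is modeled by a sum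
type). -/
def inter (A₁ A₂ : FOAA Sig X D) : FOAA Sig X D where
  Q := A₁.Q ⊕ A₂.Q
  QList := A₁.QList.map Sum.inl ++ A₂.QList.map Sum.inr
  QList_mem := by
    intro q
    cases q with
    | inl q => exact List.mem_append_left _ (List.mem_map_of_mem (A₁.QList_mem q))
    | inr q => exact List.mem_append_right _ (List.mem_map_of_mem (A₂.QList_mem q))
  ar := Sum.elim A₁.ar A₂.ar
  init := .and (Fml.mapPred Sum.inl (fun _ => rfl) A₁.init)
               (Fml.mapPred Sum.inr (fun _ => rfl) A₂.init)
  init_pos := by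
    exact ⟨Fml.polarity_mapPred (Q' := A₁.Q ⊕ A₂.Q) (ar' := Sum.elim A₁.ar A₂.ar)
        Sum.inl (fun _ => rfl) A₁.init true A₁.init_pos,
      Fml.polarity_mapPred (Q' := A₁.Q ⊕ A₂.Q) (ar' := Sum.elim A₁.ar A₂.ar)
        Sum.inr (fun _ => rfl) A₂.init true A₂.init_pos⟩
  F := Sum.inl '' A₁.F ∪ Sum.inr '' A₂.F
  delta := fun q a =>
    match q with
    | Sum.inl q₁ => Fml.mapPred Sum.inl (fun _ => rfl) (A₁.delta q₁ a)
    | Sum.inr q₂ => Fml.mapPred Sum.inr (fun _ => rfl) (A₂.delta q₂ a)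
  delta_pos := by
    intro q a
    cases q with
    | inl q₁ =>
        exact Fml.polarity_mapPred (Q' := A₁.Q ⊕ A₂.Q) (ar' := Sum.elim A₁.ar A₂.ar)
          Sum.inl (fun _ => rfl) (A₁.delta q₁ a) true (A₁.delta_pos q₁ a)
    | inr q₂ =>
        exact Fml.polarity_mapPred (Q' := A₁.Q ⊕ A₂.Q) (ar' := Sum.elim A₁.ar A₂.ar)
          Sum.inr (fun _ => rfl) (A₂.delta q₂ a) true (A₂.delta_pos q₂ a)

/-- The dual automaton `Ā`. -/
def dualA (A : FOAA Sig X D) : FOAA Sig X D where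
  Q := A.Q
  QList := A.QList
  QList_mem := A.QList_mem
  ar := A.ar
  init := A.init.dual
  init_pos := Fml.polarity_dual A.init true A.init_pos
  F := A.Fᶜ
  delta := fun q a => (A.delta q a).dual
  delta_pos := fun q a => Fml.polarity_dual (A.delta q a) true (A.delta_pos q a)

end FOAA

/-! ### Quantifier-free formulas and prenex forms -/

inductive QF (D Q : Type) (ar : Q → ℕ) (V : Type) : Type where
  | eq : Term D V → Term D V → QF D Q ar V
  | pred : (q : Q) → (Fin (ar q) → Term D V) → QF D Q ar V
  | not : QF D Q ar V → QF D Q ar V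
  | and : QF D Q ar V → QF D Q ar V → QF D Q ar V

namespace QF

variable {D Q : Type} {ar : Q → ℕ} {V W : Type}

def Sat (I : Interp D Q ar) : QF D Q ar V → (V → D) → Prop
  | .eq t s, ν => t.eval ν = s.eval ν
  | .pred q ts, ν => (fun i => (ts i).eval ν) ∈ I q
  | .not φ, ν => ¬ Sat I φ ν
  | .and φ ψ, ν => Sat I φ ν ∧ Sat I ψ ν

def rename (f : V → W) : QF D Q ar V → QF D Q ar W
  | .eq t s => .eq (t.rename f) (s.rename f)
  | .pred q ts => .pred q fun i => (ts i).rename f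
  | .not φ => .not (φ.rename f)
  | .and φ ψ => .and (φ.rename f) (ψ.rename f)

def subst (σ : V → Term D W) : QF D Q ar V → QF D Q ar W
  | .eq t s => .eq (t.subst σ) (s.subst σ)
  | .pred q ts => .pred q fun i => (ts i).subst σ
  | .not φ => .not (φ.subst σ)
  | .and φ ψ => .and (φ.subst σ) (ψ.subst σ)

def imp (φ ψ : QF D Q ar V) : QF D Q ar V := .not (.and φ (.not ψ))

def toFml : QF D Q ar V → Fml D Q ar V
  | .eq t s => .eq t s
  | .pred q ts => .pred q ts
  | .not φ => .not φ.toFml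
  | .and φ ψ => .and φ.toFml ψ.toFml

/-- The list of predicate atoms occurring in a quantifier-free formula. -/
def atoms : QF D Q ar V → List (Σ q : Q, Fin (ar q) → Term D V)
  | .eq _ _ => []
  | .pred q ts => [⟨q, ts⟩]
  | .not φ => φ.atoms
  | .and φ ψ => φ.atoms ++ ψ.atoms

def fv : QF D Q ar V → Set V
  | .eq t s => t.vars ∪ s.vars
  | .pred _ ts => ⋃ i, (ts i).vars
  | .not φ => φ.fv
  | .and φ ψ => φ.fv ∪ ψ.fv

def predsPol (b : Bool) : QF D Q ar V → Set Q
  | .eq _ _ => ∅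
  | .pred q _ => if b then {q} else ∅
  | .not φ => φ.predsPol (!b)
  | .and φ ψ => φ.predsPol b ∪ ψ.predsPol b

def Polarity : QF D Q ar V → Bool → Prop
  | .eq _ _, _ => True
  | .pred _ _, b => b = true
  | .not φ, b => φ.Polarity (!b)
  | .and φ ψ, b => φ.Polarity b ∧ ψ.Polarity b

def Positive (φ : QF D Q ar V) : Prop := φ.Polarity true

/-- In-place replacement of the atoms of predicate `q0` by instances of a formula. -/
def replaceAtom [DecidableEq Q] (q0 : Q) (χ : (Fin (ar q0) → Term D V) → Fml D Q ar V) :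
    QF D Q ar V → Fml D Q ar V
  | .eq t s => .eq t s
  | .pred q ts =>
      if h : q = q0 then χ (fun i => ts (Fin.cast (congrArg ar h.symm) i))
      else .pred q ts
  | .not φ => .not (replaceAtom q0 χ φ)
  | .and φ ψ => .and (replaceAtom q0 χ φ) (replaceAtom q0 χ ψ)

end QF

/-- Semantics of a quantifier prefix : the `j`-th entry of `pre` binds the prenex variable
of index `j` (`true` = ∃, `false` = ∀). -/
def quantSem {D : Type} : List Bool → ℕ → ((ℕ → D) → Prop) → (ℕ → D) → Prop
  | [], _, P, g => P g
  | b :: rest, j, P, g =>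
      if b then ∃ d : D, quantSem rest (j + 1) P (Function.update g j d)
      else ∀ d : D, quantSem rest (j + 1) P (Function.update g j d)

/-- A formula in prenex form: a quantifier prefix binding the prenex variables
(the `ℕ` summand of the variables of the matrix). -/
structure PF (D Q : Type) (ar : Q → ℕ) (V : Type) : Type where
  pre : List Bool
  mat : QF D Q ar (V ⊕ ℕ)

namespace PF

variable {D Q : Type} {ar : Q → ℕ} {V : Type}

def Sat [Nonempty D] (I : Interp D Q ar) (φ : PF D Q ar V) (ν : V → D) : Prop :=
  quantSem φ.pre 0 (fun g => φ.mat.Sat I (Sum.elim ν g)) fun _ => Classical.arbitrary D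

end PF

/-- Prenex normal form. -/
def prenex {D Q : Type} {ar : Q → ℕ} : {V : Type} → Fml D Q ar V → PF D Q ar V
  | _, .eq t s => ⟨[], .eq (t.rename Sum.inl) (s.rename Sum.inl)⟩
  | _, .pred q ts => ⟨[], .pred q fun i => (ts i).rename Sum.inl⟩
  | _, .not φ =>
      let p := prenex φ
      ⟨p.pre.map (!·), .not p.mat⟩
  | _, .and φ ψ =>
      let p := prenex φ
      let r := prenex ψ
      ⟨p.pre ++ r.pre, .and p.mat (r.mat.rename (Sum.map id (· + p.pre.length)))⟩
  | _, .ex φ =>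
      let p := prenex φ
      ⟨true :: p.pre,
        p.mat.rename fun v =>
          match v with
          | Sum.inl (some x) => Sum.inl x
          | Sum.inl none => Sum.inr 0
          | Sum.inr j => Sum.inr (j + 1)⟩

/-! ### The path-quantifier-eliminated acceptance formula `Θ̂(α)` -/

namespace FOAA

variable {Sig X D : Type} (A : FOAA Sig X D)

/-- One stage of the construction of `Θ̂ₙ` : conjoin, for every atom `q⁽ʲ⁾(t̄)` occurring in
the matrix so far, the instance `q⁽ʲ⁾(t̄) → ψ⁽ʲ⁺¹⁾[t̄/ȳ]` of the corresponding transition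
rule for the letter `a`, prenexing the transition quantifiers of `ψ` on the fly. -/
def stepPF (j : ℕ) (a : Sig) (Θ : PF D (ℕ × A.Q) (fun p => A.ar p.2) (ℕ × X)) :
    PF D (ℕ × A.Q) (fun p => A.ar p.2) (ℕ × X) :=
  (Θ.mat.atoms.filter fun atm => atm.1.1 == j).foldl
    (fun acc atm =>
      let pψ := prenex (A.ruleF (j + 1) atm.1.2 a)
      let m' : QF D (ℕ × A.Q) (fun p => A.ar p.2) ((ℕ × X) ⊕ ℕ) :=
        pψ.mat.subst fun v =>
          match v with
          | Sum.inl (Sum.inl x) => Term.var (Sum.inl x)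
          | Sum.inl (Sum.inr i) => atm.2 i
          | Sum.inr jj => Term.var (Sum.inr (jj + acc.pre.length))
      ⟨acc.pre ++ pψ.pre, .and acc.mat (QF.imp (.pred atm.1 atm.2) m')⟩)
    Θ

/-- `Θ̂ₙ(αᵢ)` for a prefix length `i ≤ |α|`. -/
def thetaHatStage (α : List Sig) (i : ℕ) : PF D (ℕ × A.Q) (fun p => A.ar p.2) (ℕ × X) :=
  ((List.finRange α.length).take i).foldl
    (fun acc j => A.stepPF j.val (α.get j) acc)
    (prenex ((stampF 0 A.init).rename fun v : Empty => v.elim))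

/-- `Θ̂ₙ(αₙ)`. -/
def thetaHatN (α : List Sig) : PF D (ℕ × A.Q) (fun p => A.ar p.2) (ℕ × X) :=
  A.thetaHatStage α α.length

/-- `Θ̂(α)`, in prenex form : `Θ̂ₙ(αₙ)` conjoined with the instances
`q⁽ⁿ⁾(t̄) → ⊥` for the occurring atoms with `q ∈ Q∖F`. -/
def thetaHat [Nonempty D] (α : List Sig) : PF D (ℕ × A.Q) (fun p => A.ar p.2) (ℕ × X) :=
  let Θ := A.thetaHatN α
  ⟨Θ.pre,
    (Θ.mat.atoms.filter fun atm => atm.1.1 == α.length).foldl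
      (fun m atm =>
        if atm.1.2 ∈ A.F then m
        else .and m (QF.imp (.pred atm.1 atm.2)
          (.not (.eq (Term.const (Classical.arbitrary D)) (Term.const (Classical.arbitrary D))))))
      Θ.mat⟩

/-- The length of the quantifier prefix of `Θ̂ₙ(αᵢ)`. -/
def stagePreLen (α : List Sig) (i : ℕ) : ℕ := (A.thetaHatStage α i).pre.length

/-- `ξ` : the monotonic function mapping each transition quantifier of `Θ̂(α)` to the
minimal stage of the sequence `Θ̂ₙ(α₀), …, Θ̂ₙ(αₙ)` where it occurs. -/
def xi (α : List Sig) (j : ℕ) : ℕ := sInf {i : ℕ | j < A.stagePreLen α i}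

/-- `ξ⁻¹max(k)` : the maximal quantifier index mapped by `ξ` to the stage `k`. -/
def xiInvMax (α : List Sig) (k : ℕ) : ℕ :=
  sSup {j : ℕ | j < (A.thetaHatN α).pre.length ∧ A.xi α j = k}

end FOAA

/-! ### Generalized Lyndon interpolants -/

namespace FOAA

variable {Sig X D : Type} (A : FOAA Sig X D)

/-- A generalized Lyndon interpolant (GLI) for the input event sequence `α`;
the formulas `Is k` live over an ambient variable type `W` into which the time-stamped
input variables are embedded by `ρ`. -/
structure IsGLI [Nonempty D] (α : List Sig) {W : Type} (ρ : (ℕ × X) → W)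
    (Is : ℕ → Fml D (ℕ × A.Q) (fun p => A.ar p.2) W) : Prop where
  neg_free : ∀ k ≤ α.length, (Is k).predsPol false = ∅
  init_entail : ∀ (I : Interp D (ℕ × A.Q) (fun p => A.ar p.2)) (ν : W → D),
    (((stampF 0 A.init).rename (fun v : Empty => v.elim) : Fml D (ℕ × A.Q) _ W)).Sat I ν →
    (Is 0).Sat I ν
  step_entail : ∀ (k : Fin α.length) (I : Interp D (ℕ × A.Q) (fun p => A.ar p.2)) (ν : W → D),
    (Is k.val).Sat I ν → ((A.stepFml k.val (α.get k)).rename ρ).Sat I ν →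
    (Is (k.val + 1)).Sat I ν
  final_unsat : ¬ ∃ (I : Interp D (ℕ × A.Q) (fun p => A.ar p.2)) (ν : W → D),
    (Is α.length).Sat I ν ∧ ((A.finalFml α.length).rename ρ).Sat I ν

/-! ### Unfoldings -/

/-- `⋀_{q ∈ Q∖F} ∀ȳ. q(ȳ) → ⊥` over the plain (un-stamped) signature. -/
def finalConstraint [Nonempty D] : Fml D A.Q A.ar Empty :=
  Fml.conj <| A.QList.map fun q =>
    if q ∈ A.F then Fml.tt
    else Fml.allN (Fml.imp (.pred q fun i => .var (Sum.inr i)) Fml.ff)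

/-- An unfolding of `A` : a finite, prefix-closed and complete set `dom ⊆ Σ*` labeled with
positive sentences, compatible with the transition relation. -/
structure IsUnfolding [Nonempty D] (dom : Set (List Sig))
    (lab : List Sig → Fml D A.Q A.ar Empty) : Prop where
  finite : dom.Finite
  prefix_closed : ∀ α ∈ dom, ∀ β : List Sig, β <+: α → β ∈ dom
  complete : ∀ α ∈ dom, ∃ a : Sig, ((α ++ [a]) ∈ dom ↔ ∀ b : Sig, α ++ [b] ∈ dom)
  pos : ∀ α ∈ dom, (lab α).Positive
  init_lab : ∀ (I : Interp D A.Q A.ar) (ν : Empty → D), (lab []).Sat I ν ↔ A.init.Sat I ν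
  step : ∀ α ∈ dom, ∀ a : Sig, (α ++ [a]) ∈ dom →
    ∀ (I : Interp D (ℕ × A.Q) (fun p => A.ar p.2)) (ν : (ℕ × X) → D),
      (((stampF 0 (lab α)).rename (fun v : Empty => v.elim) :
          Fml D (ℕ × A.Q) _ (ℕ × X))).Sat I ν →
      (A.stepFml 0 a).Sat I ν →
      (((stampF 1 (lab (α ++ [a]))).rename (fun v : Empty => v.elim) :
          Fml D (ℕ × A.Q) _ (ℕ × X))).Sat I ν

/-- A safe unfolding. -/
def UnfSafe [Nonempty D] (dom : Set (List Sig))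
    (lab : List Sig → Fml D A.Q A.ar Empty) : Prop :=
  ∀ α ∈ dom, ¬ ∃ (I : Interp D A.Q A.ar) (ν : Empty → D),
    (lab α).Sat I ν ∧ (A.finalConstraint).Sat I ν

/-- `α` is covered by `β`. -/
def Covers (dom : Set (List Sig)) (lab : List Sig → Fml D A.Q A.ar Empty)
    (α β : List Sig) : Prop :=
  β ∈ dom ∧ ∃ α' : List Sig, α' <+: α ∧ α' ∈ dom ∧
    ∀ (I : Interp D A.Q A.ar) (ν : Empty → D), (lab α').Sat I ν → (lab β).Sat I ν

def CoveredNode (dom : Set (List Sig)) (lab : List Sig → Fml D A.Q A.ar Empty)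
    (α : List Sig) : Prop :=
  ∃ β, A.Covers dom lab α β

/-- A closed unfolding : every leaf is covered by an uncovered node. -/
def UnfClosed (dom : Set (List Sig)) (lab : List Sig → Fml D A.Q A.ar Empty) : Prop :=
  ∀ α ∈ dom, (∀ a : Sig, (α ++ [a]) ∉ dom) →
    ∃ β, A.Covers dom lab α β ∧ ¬ A.CoveredNode dom lab β

end FOAA

/-- Existentially quantify the (finitely many) variables listed in `L`, yielding a
sentence. -/
def exClose {D Q : Type} {ar : Q → ℕ} [Nonempty D] {V : Type} [DecidableEq V]
    (L : List V) (φ : Fml D Q ar V) : Fml D Q ar Empty :=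
  Fml.exN (k := L.length)
    (φ.substVar fun v =>
      if hv : v ∈ L then Term.var (Sum.inr ⟨L.idxOf v, List.idxOf_lt_length_iff.mpr hv⟩)
      else Term.const (Classical.arbitrary D))

/-! ### Timed automata -/

/-- Clock constraints over `k` clocks. -/
inductive CC (k : ℕ) : Type where
  | le : Fin k → ℚ → CC k
  | ge : Fin k → ℚ → CC k
  | not : CC k → CC k
  | and : CC k → CC k → CC k

namespace CC

def sat {k : ℕ} (γ : Fin k → ℝ) : CC k → Prop
  | .le i c => γ i ≤ (c : ℝ)
  | .ge i c => (c : ℝ) ≤ γ i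
  | .not δ => ¬ sat γ δ
  | .and δ₁ δ₂ => sat γ δ₁ ∧ sat γ δ₂

/-- Translate a clock constraint into a first-order formula over ℝ, applied to the given
argument terms (the order relations are expressed via interpreted functions and equality
atoms). -/
def toFml {k : ℕ} {Q : Type} {ar : Q → ℕ} {V : Type} :
    CC k → (Fin k → Term ℝ V) → Fml ℝ Q ar V
  | .le i c, args =>
      .eq (Term.app (n := 1) (fun v => if v 0 ≤ (c : ℝ) then 1 else 0) ![args i])
        (Term.const 1)
  | .ge i c, args =>
      .eq (Term.app (n := 1) (fun v => if (c : ℝ) ≤ v 0 then 1 else 0) ![args i])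
        (Term.const 1)
  | .not δ, args => .not (δ.toFml args)
  | .and δ₁ δ₂, args => .and (δ₁.toFml args) (δ₂.toFml args)

/-- `CC.toFml` contains no predicate symbols, hence has any polarity. -/
theorem polarity_toFml {k : ℕ} {Q : Type} {ar : Q → ℕ} {V : Type} :
    ∀ (δ : CC k) (args : Fin k → Term ℝ V) (b : Bool),
      (δ.toFml (Q := Q) (ar := ar) args).Polarity b
  | .le _ _, _, _ => trivial
  | .ge _ _, _, _ => trivial
  | .not δ, args, b => polarity_toFml δ args (!b)
  | .and δ₁ δ₂, args, b => ⟨polarity_toFml δ₁ args b, polarity_toFml δ₂ args b⟩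

end CC

/-- A timed automaton with `k` clocks. -/
structure TimedAuto (Sig : Type) (k : ℕ) : Type 1 where
  S : Type
  SList : List S
  SList_mem : ∀ s : S, s ∈ SList
  S0 : Set S
  F : Set S
  E : List (S × Sig × S × Set (Fin k) × CC k)

/-- `τᵢ` : the time stamp before the `i`-th step (`τ₀ = 0`). -/
def timeAt {Sig : Type} (w : List (Sig × ℝ)) : ℕ → ℝ
  | 0 => 0
  | i + 1 => (w.map Prod.snd).getD i 0

/-- `0 ≤ τ₁ < τ₂ < …`. -/
def IsTimedWord {Sig : Type} (w : List (Sig × ℝ)) : Prop :=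
  (∀ h : 0 < w.length, 0 ≤ (w.get ⟨0, h⟩).2) ∧
    List.Chain' (· < ·) (w.map Prod.snd)

namespace TimedAuto

variable {Sig : Type} {k : ℕ} (T : TimedAuto Sig k)

/-- `T` has an accepting run over the timed word `w`. -/
def Accepts (w : List (Sig × ℝ)) : Prop :=
  ∃ r : ℕ → T.S × (Fin k → ℝ),
    (r 0).1 ∈ T.S0 ∧ ((r 0).2 = fun _ => 0) ∧
    (∀ i : Fin w.length,
      ∃ e ∈ T.E,
        e.1 = (r i.val).1 ∧ e.2.1 = (w.get i).1 ∧ e.2.2.1 = (r (i.val + 1)).1 ∧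
        CC.sat (fun c => (r i.val).2 c + (timeAt w (i.val + 1) - timeAt w i.val))
          e.2.2.2.2 ∧
        ∀ c : Fin k, (r (i.val + 1)).2 c =
          if c ∈ e.2.2.2.1 then 0
          else (r i.val).2 c + (timeAt w (i.val + 1) - timeAt w i.val)) ∧
    (r w.length).1 ∈ T.F

def Lang : Set (List (Sig × ℝ)) := {w | IsTimedWord w ∧ T.Accepts w}

/-- The first-order alternating automaton `A_T` associated with a timed automaton `T` :
predicates of arity `k+1` (the `k` values `yᵢ` tracking `t − xᵢ` plus the time stamp `z`
of the previous event), one input variable `t`. -/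
def toFOAA : FOAA Sig Unit ℝ where
  Q := T.S
  QList := T.SList
  QList_mem := T.SList_mem
  ar := fun _ => k + 1
  init := Fml.disj <|
    (T.SList.filter fun s => decide (s ∈ T.S0)).map fun s =>
      .pred s fun _ => Term.const 0
  init_pos := by
    apply Fml.polarity_disj
    intro φ hφ
    simp only [List.mem_map] at hφ
    obtain ⟨s, -, rfl⟩ := hφ
    exact rfl
  F := T.F
  delta := fun s a =>
    Fml.disj <|
      (T.E.filter fun e => decide (e.1 = s ∧ e.2.1 = a)).map fun e =>
        .and
          (.eq (Term.app (n := 2) (fun v => if v 0 < v 1 then 1 else 0)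
              ![Term.var (Sum.inr (Fin.last k)), Term.var (Sum.inl ())])
            (Term.const 1))
          (.and
            (e.2.2.2.2.toFml fun i =>
              Term.app (n := 2) (fun v => v 0 - v 1)
                ![Term.var (Sum.inr (Fin.last k)), Term.var (Sum.inr i.castSucc)])
            (.pred e.2.2.1 fun i =>
              Fin.lastCases (Term.var (Sum.inl ()))
                (fun c =>
                  if c ∈ e.2.2.2.1 then Term.var (Sum.inr (Fin.last k))
                  else Term.var (Sum.inr c.castSucc))
                i))
  delta_pos := by
    intro s a
    apply Fml.polarity_disj
    intro φ hφ
    simp only [List.mem_map] at hφ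
    obtain ⟨e, -, rfl⟩ := hφ
    exact ⟨trivial, CC.polarity_toFml _ _ true, rfl⟩

end TimedAuto

/-- The encoding `d(w)` of a timed word as a data word. -/
def encodeTimed {Sig : Type} (w : List (Sig × ℝ)) : DWord Sig Unit ℝ :=
  w.map fun p => (p.1, fun _ => p.2)

/-! ### Register automata -/

/-- A finite-memory (register) automaton with `r` registers over the infinite alphabet `A`;
`none` plays the role of the symbol `#`. -/
structure RegAuto (A : Type) (r : ℕ) : Type 1 where
  S : Type
  SList : List S
  SList_mem : ∀ s : S, s ∈ SList
  s0 : S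
  u0 : Fin r → Option A
  u0_distinct : ∀ i j : Fin r, i ≠ j → u0 i = u0 j → u0 i = none
  rho : S → Option (Fin r)
  mu : List (S × Fin r × S)
  F : Set S

namespace RegAuto

variable {A : Type} {r : ℕ} (R : RegAuto A r)

def Accepts (word : List A) : Prop :=
  ∃ v : ℕ → R.S × (Fin r → Option A),
    v 0 = (R.s0, R.u0) ∧
    (∀ i : Fin word.length,
      ((∃ kk : Fin r, (v i.val).2 kk = some (word.get i) ∧
          (v (i.val + 1)).2 = (v i.val).2 ∧
          ((v i.val).1, kk, (v (i.val + 1)).1) ∈ R.mu) ∨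
        ((∀ kk : Fin r, (v i.val).2 kk ≠ some (word.get i)) ∧
          ∃ kk : Fin r, R.rho (v i.val).1 = some kk ∧
            (v (i.val + 1)).2 kk = some (word.get i) ∧
            (∀ kk' : Fin r, kk' ≠ kk → (v (i.val + 1)).2 kk' = (v i.val).2 kk') ∧
            ((v i.val).1, kk, (v (i.val + 1)).1) ∈ R.mu))) ∧
    (v word.length).1 ∈ R.F

def Lang : Set (List A) := {u | R.Accepts u}

/-- The first-order alternating automaton `A_R` associated with a register automaton `R` :
a single input event, one input variable `x`, predicates of arity `r`, over the data
domain `Option A` (where `none` encodes `#`). -/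
def toFOAA : FOAA Unit Unit (Option A) where
  Q := R.S
  QList := R.SList
  QList_mem := R.SList_mem
  ar := fun _ => r
  init := .pred R.s0 fun i => Term.const (R.u0 i)
  init_pos := rfl
  F := R.F
  delta := fun s _ =>
    Fml.disj <|
      (R.mu.filter fun m => decide (m.1 = s)).map fun m =>
        Fml.or
          (.and (.eq (Term.var (Sum.inr m.2.1)) (Term.var (Sum.inl ())))
            (.pred m.2.2 fun i => Term.var (Sum.inr i)))
          (.and
            (Fml.conj <| (List.finRange r).map fun i =>
              .not (.eq (Term.var (Sum.inl ())) (Term.var (Sum.inr i))))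
            (.pred m.2.2 fun i =>
              if i = m.2.1 then Term.var (Sum.inl ()) else Term.var (Sum.inr i)))
  delta_pos := by
    intro s a
    apply Fml.polarity_disj
    intro φ hφ
    simp only [List.mem_map] at hφ
    obtain ⟨m, -, rfl⟩ := hφ
    refine Fml.polarity_or ⟨trivial, rfl⟩ ⟨?_, rfl⟩
    apply Fml.polarity_conj
    intro ψ hψ
    simp only [List.mem_map] at hψ
    obtain ⟨i, -, rfl⟩ := hψ
    exact trivial

end RegAuto

/-- The encoding of a word over the alphabet `A` as a data word. -/
def encodeReg {A : Type} (u : List A) : DWord Unit Unit (Option A) :=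
  u.map fun a => ((), fun _ => some a)

end FOADA


/-! ### Auxiliary development for Lemma 3.2 -/

namespace FOADA

namespace Term

variable {D V W : Type}

theorem eval_rename (f : V → W) (ν : W → D) :
    ∀ t : Term D V, (t.rename f).eval ν = t.eval (ν ∘ f)
  | var _ => rfl
  | app g ts => congrArg g (funext fun i => eval_rename f ν (ts i))

theorem eval_subst (σ : V → Term D W) (ν : W → D) :
    ∀ t : Term D V, (t.subst σ).eval ν = t.eval (fun v => (σ v).eval ν)
  | var _ => rfl
  | app g ts => congrArg g (funext fun i => eval_subst σ ν (ts i))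

theorem eval_congr {ν ν' : V → D} :
    ∀ t : Term D V, (∀ v ∈ t.vars, ν v = ν' v) → t.eval ν = t.eval ν'
  | var v, h => h v rfl
  | app g ts, h =>
      congrArg g (funext fun i =>
        eval_congr (ts i) fun v hv => h v (Set.mem_iUnion.2 ⟨i, hv⟩))

theorem mem_vars_rename {f : V → W} {w : W} :
    ∀ {t : Term D V}, w ∈ (t.rename f).vars → ∃ v ∈ t.vars, f v = w
  | .var v, h => ⟨v, rfl, ((Set.mem_singleton_iff).1 h).symm⟩
  | .app g ts, h => by
      simp only [Term.rename, Term.vars, Set.mem_iUnion] at h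
      obtain ⟨i, hi⟩ := h
      obtain ⟨v, hv, rfl⟩ := mem_vars_rename hi
      exact ⟨v, Set.mem_iUnion.2 ⟨i, hv⟩, rfl⟩

theorem mem_vars_subst {σ : V → Term D W} {w : W} :
    ∀ {t : Term D V}, w ∈ (t.subst σ).vars → ∃ v ∈ t.vars, w ∈ (σ v).vars
  | .var v, h => ⟨v, rfl, h⟩
  | .app g ts, h => by
      simp only [Term.subst, Term.vars, Set.mem_iUnion] at h
      obtain ⟨i, hi⟩ := h
      obtain ⟨v, hv, hw⟩ := mem_vars_subst hi
      exact ⟨v, Set.mem_iUnion.2 ⟨i, hv⟩, hw⟩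

end Term

namespace QF

variable {D Q : Type} {ar : Q → ℕ} {V W : Type} {I : Interp D Q ar}

theorem sat_rename (f : V → W) (ν : W → D) :
    ∀ φ : QF D Q ar V, (φ.rename f).Sat I ν ↔ φ.Sat I (ν ∘ f)
  | .eq t s => by simp [rename, Sat, Term.eval_rename]
  | .pred q ts => by simp [rename, Sat, Term.eval_rename]
  | .not φ => by simp [rename, Sat, sat_rename f ν φ]
  | .and φ ψ => by simp [rename, Sat, sat_rename f ν φ, sat_rename f ν ψ]

theorem sat_subst (σ : V → Term D W) (ν : W → D) :
    ∀ φ : QF D Q ar V, (φ.subst σ).Sat I ν ↔ φ.Sat I (fun v => (σ v).eval ν)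
  | .eq t s => by simp [subst, Sat, Term.eval_subst]
  | .pred q ts => by simp [subst, Sat, Term.eval_subst]
  | .not φ => by simp [subst, Sat, sat_subst σ ν φ]
  | .and φ ψ => by simp [subst, Sat, sat_subst σ ν φ, sat_subst σ ν ψ]

theorem sat_congr {ν ν' : V → D} :
    ∀ φ : QF D Q ar V, (∀ v ∈ φ.fv, ν v = ν' v) → (φ.Sat I ν ↔ φ.Sat I ν')
  | .eq t s, h => by
      have ht : t.eval ν = t.eval ν' :=
        Term.eval_congr t fun v hv => h v (Or.inl hv)
      have hs : s.eval ν = s.eval ν' :=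
        Term.eval_congr s fun v hv => h v (Or.inr hv)
      simp [Sat, ht, hs]
  | .pred q ts, h => by
      have : (fun i => (ts i).eval ν) = fun i => (ts i).eval ν' :=
        funext fun i => Term.eval_congr (ts i) fun v hv =>
          h v (Set.mem_iUnion.2 ⟨i, hv⟩)
      simp [Sat, this]
  | .not φ, h => by simp [Sat, sat_congr φ h]
  | .and φ ψ, h => by
      simp [Sat, sat_congr φ fun v hv => h v (Or.inl hv),
        sat_congr ψ fun v hv => h v (Or.inr hv)]

theorem mem_fv_rename {f : V → W} {w : W} :
    ∀ {φ : QF D Q ar V}, w ∈ (φ.rename f).fv → ∃ v ∈ φ.fv, f v = w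
  | .eq t s, h => by
      rcases h with h | h
      · obtain ⟨v, hv, rfl⟩ := Term.mem_vars_rename h
        exact ⟨v, Or.inl hv, rfl⟩
      · obtain ⟨v, hv, rfl⟩ := Term.mem_vars_rename h
        exact ⟨v, Or.inr hv, rfl⟩
  | .pred q ts, h => by
      simp only [rename, fv, Set.mem_iUnion] at h
      obtain ⟨i, hi⟩ := h
      obtain ⟨v, hv, rfl⟩ := Term.mem_vars_rename hi
      exact ⟨v, Set.mem_iUnion.2 ⟨i, hv⟩, rfl⟩
  | .not φ, h => mem_fv_rename (φ := φ) h
  | .and φ ψ, h => by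
      rcases h with h | h
      · obtain ⟨v, hv, rfl⟩ := mem_fv_rename (φ := φ) h
        exact ⟨v, Or.inl hv, rfl⟩
      · obtain ⟨v, hv, rfl⟩ := mem_fv_rename (φ := ψ) h
        exact ⟨v, Or.inr hv, rfl⟩

theorem mem_fv_subst {σ : V → Term D W} {w : W} :
    ∀ {φ : QF D Q ar V}, w ∈ (φ.subst σ).fv → ∃ v ∈ φ.fv, w ∈ (σ v).vars
  | .eq t s, h => by
      rcases h with h | h
      · obtain ⟨v, hv, hw⟩ := Term.mem_vars_subst h
        exact ⟨v, Or.inl hv, hw⟩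
      · obtain ⟨v, hv, hw⟩ := Term.mem_vars_subst h
        exact ⟨v, Or.inr hv, hw⟩
  | .pred q ts, h => by
      simp only [subst, fv, Set.mem_iUnion] at h
      obtain ⟨i, hi⟩ := h
      obtain ⟨v, hv, hw⟩ := Term.mem_vars_subst hi
      exact ⟨v, Set.mem_iUnion.2 ⟨i, hv⟩, hw⟩
  | .not φ, h => mem_fv_subst (φ := φ) h
  | .and φ ψ, h => by
      rcases h with h | h
      · obtain ⟨v, hv, hw⟩ := mem_fv_subst (φ := φ) h
        exact ⟨v, Or.inl hv, hw⟩
      · obtain ⟨v, hv, hw⟩ := mem_fv_subst (φ := ψ) h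
        exact ⟨v, Or.inr hv, hw⟩

theorem atoms_rename (f : V → W) :
    ∀ φ : QF D Q ar V,
      (φ.rename f).atoms = φ.atoms.map fun a => ⟨a.1, fun i => (a.2 i).rename f⟩
  | .eq _ _ => rfl
  | .pred _ _ => rfl
  | .not φ => atoms_rename f φ
  | .and φ ψ => by
      simp [rename, atoms, atoms_rename f φ, atoms_rename f ψ]

theorem atoms_subst (σ : V → Term D W) :
    ∀ φ : QF D Q ar V,
      (φ.subst σ).atoms = φ.atoms.map fun a => ⟨a.1, fun i => (a.2 i).subst σ⟩
  | .eq _ _ => rfl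
  | .pred _ _ => rfl
  | .not φ => atoms_subst σ φ
  | .and φ ψ => by
      simp [subst, atoms, atoms_subst σ φ, atoms_subst σ ψ]

theorem vars_atoms_subset_fv :
    ∀ {φ : QF D Q ar V} {a}, a ∈ φ.atoms → ∀ (i) {v}, v ∈ (a.2 i).vars → v ∈ φ.fv
  | .eq _ _, a, ha => by simp [atoms] at ha
  | .pred q ts, a, ha => by
      intro i v hv
      simp only [atoms, List.mem_singleton] at ha
      subst ha
      exact Set.mem_iUnion.2 ⟨i, hv⟩
  | .not φ, a, ha => vars_atoms_subset_fv (φ := φ) ha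
  | .and φ ψ, a, ha => by
      intro i v hv
      rcases List.mem_append.1 ha with h | h
      · exact Or.inl (vars_atoms_subset_fv h i hv)
      · exact Or.inr (vars_atoms_subset_fv h i hv)

/-- `IsConj c m` : `c` is one of the conjuncts of the nested conjunction `m`. -/
inductive IsConj {D Q : Type} {ar : Q → ℕ} {V : Type} (c : QF D Q ar V) :
    QF D Q ar V → Prop
  | refl : IsConj c c
  | left {m₁ m₂} : IsConj c m₁ → IsConj c (.and m₁ m₂)
  | right {m₁ m₂} : IsConj c m₂ → IsConj c (.and m₁ m₂)

theorem IsConj.sat {c m : QF D Q ar V} (h : IsConj c m) {ν : V → D}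
    (hm : m.Sat I ν) : c.Sat I ν := by
  induction h with
  | refl => exact hm
  | left _ ih => exact ih hm.1
  | right _ ih => exact ih hm.2

theorem IsConj.atoms_subset {c m : QF D Q ar V} (h : IsConj c m) :
    ∀ a ∈ c.atoms, a ∈ m.atoms := by
  induction h with
  | refl => exact fun a ha => ha
  | left _ ih => exact fun a ha => List.mem_append.2 (Or.inl (ih a ha))
  | right _ ih => exact fun a ha => List.mem_append.2 (Or.inr (ih a ha))

end QF

end FOADA


namespace FOADA

namespace Fml

variable {D Q : Type} {ar : Q → ℕ} {I : Interp D Q ar}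

theorem sat_rename : ∀ {V W : Type} (f : V → W) (φ : Fml D Q ar V) (ν : W → D),
    (φ.rename f).Sat I ν ↔ φ.Sat I (ν ∘ f)
  | _, _, f, .eq t s, ν => by simp [rename, Sat, Term.eval_rename]
  | _, _, f, .pred q ts, ν => by simp [rename, Sat, Term.eval_rename]
  | _, _, f, .not φ, ν => by simp [rename, Sat, sat_rename f φ ν]
  | _, _, f, .and φ ψ, ν => by simp [rename, Sat, sat_rename f φ ν, sat_rename f ψ ν]
  | _, _, f, .ex φ, ν => by
      simp only [rename, Sat]
      refine exists_congr fun d => ?_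
      rw [sat_rename (Option.map f) φ]
      refine (iff_of_eq (congrArg _ ?_))
      funext o
      cases o <;> rfl

theorem sat_tt [Nonempty D] {V : Type} (ν : V → D) : (tt : Fml D Q ar V).Sat I ν := rfl

theorem sat_imp [Nonempty D] {V : Type} {φ ψ : Fml D Q ar V} {ν : V → D} :
    (Fml.imp φ ψ).Sat I ν ↔ (φ.Sat I ν → ψ.Sat I ν) := by
  simp only [imp, Sat]
  tauto

theorem sat_conj [Nonempty D] {V : Type} :
    ∀ (l : List (Fml D Q ar V)) (ν : V → D),
      (conj l).Sat I ν ↔ ∀ φ ∈ l, φ.Sat I ν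
  | [], ν => by simp [conj, sat_tt]
  | φ :: l, ν => by
      simp only [conj, Sat, sat_conj l ν, List.mem_cons]
      constructor
      · rintro ⟨h1, h2⟩ ψ (rfl | hψ)
        · exact h1
        · exact h2 _ hψ
      · intro h
        exact ⟨h φ (Or.inl rfl), fun ψ hψ => h ψ (Or.inr hψ)⟩

theorem sat_exN [Nonempty D] :
    ∀ {k : ℕ} {V : Type} (φ : Fml D Q ar (V ⊕ Fin k)) (ν : V → D),
      (Fml.exN φ).Sat I ν ↔ ∃ d : Fin k → D, φ.Sat I (Sum.elim ν d)
  | 0, V, φ, ν => by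
      simp only [exN, sat_rename]
      constructor
      · intro h
        refine ⟨Fin.elim0, ?_⟩
        convert h using 2
        funext v
        cases v with
        | inl v => rfl
        | inr i => exact i.elim0
      · rintro ⟨d, h⟩
        convert h using 2
        funext v
        cases v with
        | inl v => rfl
        | inr i => exact i.elim0
  | k + 1, V, φ, ν => by
      rw [exN, sat_exN]
      constructor
      · rintro ⟨d, d0, h⟩
        rw [sat_rename] at h
        refine ⟨Fin.snoc d d0, ?_⟩
        convert h using 2
        funext v
        cases v with
        | inl v => rfl
        | inr j =>
            induction j using Fin.lastCases with
            | last => simp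
            | cast i => simp
      · rintro ⟨e, h⟩
        refine ⟨fun i => e i.castSucc, e (Fin.last k), ?_⟩
        rw [sat_rename]
        convert h using 2
        funext v
        cases v with
        | inl v => rfl
        | inr j =>
            induction j using Fin.lastCases with
            | last => simp
            | cast i => simp

theorem sat_allN [Nonempty D] {k : ℕ} {V : Type} (φ : Fml D Q ar (V ⊕ Fin k)) (ν : V → D) :
    (Fml.allN φ).Sat I ν ↔ ∀ d : Fin k → D, φ.Sat I (Sum.elim ν d) := by
  simp only [allN, Sat, sat_exN, not_exists, not_not]

theorem polarity_stampF {i : ℕ} :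
    ∀ {V : Type} (φ : Fml D Q ar V) (b : Bool), φ.Polarity b → (stampF i φ).Polarity b
  | _, .eq _ _, _, _ => trivial
  | _, .pred _ _, _, h => h
  | _, .not φ, b, h => polarity_stampF φ (!b) h
  | _, .and φ ψ, b, h => ⟨polarity_stampF φ b h.1, polarity_stampF ψ b h.2⟩
  | _, .ex φ, b, h => polarity_stampF φ b h

theorem preds_stampF {i : ℕ} :
    ∀ {V : Type} (φ : Fml D Q ar V) (p : ℕ × Q), p ∈ (stampF i φ).preds → p.1 = i
  | _, .eq _ _, p, h => absurd h (by simp [stampF, preds])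
  | _, .pred q ts, p, h => by
      simp only [stampF, preds, Set.mem_singleton_iff] at h
      subst h; rfl
  | _, .not φ, p, h => preds_stampF φ p h
  | _, .and φ ψ, p, h => by
      rcases h with h | h
      · exact preds_stampF φ p h
      · exact preds_stampF ψ p h
  | _, .ex φ, p, h => preds_stampF φ p h

theorem preds_rename : ∀ {V W : Type} (f : V → W) (φ : Fml D Q ar V),
    (φ.rename f).preds = φ.preds
  | _, _, f, .eq _ _ => rfl
  | _, _, f, .pred _ _ => rfl
  | _, _, f, .not φ => preds_rename f φ
  | _, _, f, .and φ ψ => by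
      simp [rename, preds, preds_rename f φ, preds_rename f ψ]
  | _, _, f, .ex φ => preds_rename (Option.map f) φ

end Fml

/-! ### Prenex lemmas -/

section PrenexLemmas

variable {D Q : Type} {ar : Q → ℕ}

theorem prenex_fv_bound :
    ∀ {V : Type} (φ : Fml D Q ar V) (j : ℕ),
      Sum.inr j ∈ (prenex φ).mat.fv → j < (prenex φ).pre.length
  | _, .eq t s, j, h => by
      rcases h with h | h
      · obtain ⟨v, -, hv⟩ := Term.mem_vars_rename h
        exact absurd hv (by simp)
      · obtain ⟨v, -, hv⟩ := Term.mem_vars_rename h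
        exact absurd hv (by simp)
  | _, .pred q ts, j, h => by
      simp only [prenex, QF.fv, Set.mem_iUnion] at h
      obtain ⟨i, hi⟩ := h
      obtain ⟨v, -, hv⟩ := Term.mem_vars_rename hi
      exact absurd hv (by simp)
  | _, .not φ, j, h => by
      simpa [prenex] using prenex_fv_bound φ j h
  | _, .and φ ψ, j, h => by
      simp only [prenex, QF.fv, Set.mem_union, List.length_append] at h ⊢
      rcases h with h | h
      · exact lt_of_lt_of_le (prenex_fv_bound φ j h) (Nat.le_add_right _ _)
      · obtain ⟨v, hv, hveq⟩ := QF.mem_fv_rename h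
        cases v with
        | inl x => exact absurd hveq (by simp)
        | inr j' =>
            have hj' := prenex_fv_bound ψ j' hv
            have : j = j' + (prenex φ).pre.length := by
              simpa using hveq.symm
            omega
  | _, .ex φ, j, h => by
      simp only [prenex, List.length_cons] at h ⊢
      obtain ⟨v, hv, hveq⟩ := QF.mem_fv_rename h
      cases v with
      | inl o =>
          cases o with
          | none =>
              have : j = 0 := by simpa using hveq.symm
              omega
          | some x => exact absurd hveq (by simp)
      | inr j' =>
          have hj' := prenex_fv_bound φ j' hv
          have : j = j' + 1 := by simpa using hveq.symm
          omega

theorem prenex_atoms_preds :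
    ∀ {V : Type} (φ : Fml D Q ar V) (a), a ∈ (prenex φ).mat.atoms → a.1 ∈ φ.preds
  | _, .eq _ _, a, h => absurd h (by simp [prenex, QF.atoms])
  | _, .pred q ts, a, h => by
      simp only [prenex, QF.atoms, List.mem_singleton] at h
      subst h; rfl
  | _, .not φ, a, h => prenex_atoms_preds φ a h
  | _, .and φ ψ, a, h => by
      simp only [prenex, QF.atoms, List.mem_append] at h
      rcases h with h | h
      · exact Or.inl (prenex_atoms_preds φ a h)
      · rw [QF.atoms_rename] at h
        obtain ⟨a', ha', rfl⟩ := List.mem_map.1 h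
        exact Or.inr (prenex_atoms_preds ψ a' ha')
  | _, .ex φ, a, h => by
      simp only [prenex] at h
      rw [QF.atoms_rename] at h
      obtain ⟨a', ha', rfl⟩ := List.mem_map.1 h
      exact prenex_atoms_preds φ a' ha'

end PrenexLemmas

/-! ### Play sets (Skolem strategies for `quantSem`) -/

section PlaySet

variable {D : Type}

noncomputable def playSet : List Bool → ℕ → ((ℕ → D) → Prop) → (ℕ → D) → Set (ℕ → D)
  | [], _, _, g => {g}
  | true :: r, j, P, g =>
      if h : ∃ d, quantSem r (j + 1) P (Function.update g j d) then
        playSet r (j + 1) P (Function.update g j h.choose)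
      else ∅
  | false :: r, j, P, g =>
      ⋃ d : D, playSet r (j + 1) P (Function.update g j d)

theorem playSet_nonempty [Nonempty D] {P : (ℕ → D) → Prop} :
    ∀ (pre : List Bool) (j : ℕ) (g : ℕ → D),
      quantSem pre j P g → (playSet pre j P g).Nonempty
  | [], j, g, _ => ⟨g, rfl⟩
  | true :: r, j, g, h => by
      have hex : ∃ d, quantSem r (j + 1) P (Function.update g j d) := h
      rw [playSet, dif_pos hex]
      exact playSet_nonempty r (j + 1) _ hex.choose_spec
  | false :: r, j, g, h => by
      have hall : ∀ d, quantSem r (j + 1) P (Function.update g j d) := h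
      obtain ⟨g', hg'⟩ :=
        playSet_nonempty r (j + 1) (Function.update g j (Classical.arbitrary D))
          (hall (Classical.arbitrary D))
      exact ⟨g', Set.mem_iUnion.2 ⟨Classical.arbitrary D, hg'⟩⟩

theorem playSet_sat [Nonempty D] {P : (ℕ → D) → Prop} :
    ∀ (pre : List Bool) (j : ℕ) (g : ℕ → D),
      quantSem pre j P g → ∀ g' ∈ playSet pre j P g, P g'
  | [], j, g, h => by rintro g' rfl; exact h
  | true :: r, j, g, h => by
      intro g' hg'
      have hex : ∃ d, quantSem r (j + 1) P (Function.update g j d) := h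
      rw [playSet, dif_pos hex] at hg'
      exact playSet_sat r (j + 1) _ hex.choose_spec g' hg'
  | false :: r, j, g, h => by
      intro g' hg'
      have hall : ∀ d, quantSem r (j + 1) P (Function.update g j d) := h
      obtain ⟨d, hd⟩ := Set.mem_iUnion.1 hg'
      exact playSet_sat r (j + 1) _ (hall d) g' hd

theorem playSet_agree {P : (ℕ → D) → Prop} :
    ∀ (pre : List Bool) (j : ℕ) (g : ℕ → D) (g'), g' ∈ playSet pre j P g →
      ∀ m, m < j → g' m = g m
  | [], j, g, g', hg' => by
      intro m _
      cases hg'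
      rfl
  | true :: r, j, g, g', hg' => by
      intro m hm
      rw [playSet] at hg'
      split at hg'
      · have := playSet_agree r (j + 1) _ g' hg' m (by omega)
        rwa [Function.update_of_ne (by omega)] at this
      · exact absurd hg' (Set.notMem_empty _)
  | false :: r, j, g, g', hg' => by
      intro m hm
      obtain ⟨d, hd⟩ := Set.mem_iUnion.1 hg'
      have := playSet_agree r (j + 1) _ g' hd m (by omega)
      rwa [Function.update_of_ne (by omega)] at this

theorem playSet_univ_access [Nonempty D] {P : (ℕ → D) → Prop} :
    ∀ (pre : List Bool) (j : ℕ) (g : ℕ → D),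
      quantSem pre j P g →
      ∀ g' ∈ playSet pre j P g, ∀ (i) (hi : i < pre.length),
        pre.get ⟨i, hi⟩ = false → ∀ d : D,
        ∃ g'' ∈ playSet pre j P g, (∀ m, m < j + i → g'' m = g' m) ∧ g'' (j + i) = d
  | [], j, g, h, g', hg', i, hi => by simp at hi
  | true :: r, j, g, h, g', hg', i, hi => by
      have hex : ∃ d, quantSem r (j + 1) P (Function.update g j d) := h
      rw [playSet, dif_pos hex] at hg'
      intro hfalse d
      match i, hi, hfalse with
      | 0, _, hfalse => simp at hfalse
      | i' + 1, hi, hfalse =>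
          obtain ⟨g'', hg''mem, hg''agree, hg''val⟩ :=
            playSet_univ_access r (j + 1) _ hex.choose_spec g' hg' i'
              (by simpa using hi) (by simpa using hfalse) d
          refine ⟨g'', by rw [playSet, dif_pos hex]; exact hg''mem, ?_, ?_⟩
          · intro m hm
            exact hg''agree m (by omega)
          · have : j + 1 + i' = j + (i' + 1) := by omega
            rwa [this] at hg''val
  | false :: r, j, g, h, g', hg', i, hi => by
      have hall : ∀ d, quantSem r (j + 1) P (Function.update g j d) := h
      intro hfalse d
      obtain ⟨d₀, hd₀⟩ := Set.mem_iUnion.1 hg'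
      match i, hi, hfalse with
      | 0, _, _ =>
          obtain ⟨g'', hg''⟩ := playSet_nonempty r (j + 1) (Function.update g j d) (hall d)
          refine ⟨g'', Set.mem_iUnion.2 ⟨d, hg''⟩, ?_, ?_⟩
          · intro m hm
            have h1 := playSet_agree r (j + 1) _ g'' hg'' m (by omega)
            have h2 := playSet_agree r (j + 1) _ g' hd₀ m (by omega)
            rw [h1, h2, Function.update_of_ne (by omega), Function.update_of_ne (by omega)]
          · have := playSet_agree r (j + 1) _ g'' hg'' j (by omega)
            rw [Nat.add_zero, this, Function.update_self]
      | i' + 1, hi, hfalse =>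
          obtain ⟨g'', hg''mem, hg''agree, hg''val⟩ :=
            playSet_univ_access r (j + 1) _ (hall d₀) g' hd₀ i'
              (by simpa using hi) (by simpa using hfalse) d
          refine ⟨g'', Set.mem_iUnion.2 ⟨d₀, hg''mem⟩, ?_, ?_⟩
          · intro m hm
            exact hg''agree m (by omega)
          · have : j + 1 + i' = j + (i' + 1) := by omega
            rwa [this] at hg''val

end PlaySet

end FOADA


namespace FOADA

section Transfer

variable {D Q : Type} {ar : Q → ℕ} [Nonempty D]
variable {I J : Interp D Q ar} {G : Set (ℕ → D)} {AVal : Set (Config D Q ar)}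
variable {preg : List Bool}

/-- The central transfer lemma: satisfaction of the quantifier-eliminated matrix along all
plays of a winning strategy transfers to satisfaction of the original formula in the
shrunk interpretation `J`. -/
theorem transfer
    (HU : ∀ g ∈ G, ∀ (k) (hk : k < preg.length), preg.get ⟨k, hk⟩ = false → ∀ d : D,
      ∃ g' ∈ G, (∀ m, m < k → g' m = g m) ∧ g' k = d)
    (HJ : ∀ (q : Q) (d : Fin (ar q) → D), d ∈ I q →
      (⟨q, d⟩ : Config D Q ar) ∈ AVal → d ∈ J q) :
    ∀ {V : Type} (φ : Fml D Q ar V) (b : Bool), φ.Polarity b →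
    ∀ (env : V → D) (o : ℕ),
      o + (prenex φ).pre.length ≤ preg.length →
      (∀ (j) (hj : j < (prenex φ).pre.length) (h2 : o + j < preg.length),
        preg.get ⟨o + j, h2⟩ =
          (if b then (prenex φ).pre.get ⟨j, hj⟩ else !(prenex φ).pre.get ⟨j, hj⟩)) →
    ∀ g ∈ G,
      (∀ a ∈ (prenex φ).mat.atoms, ∀ g' ∈ G, (∀ m, m < o → g' m = g m) →
        (⟨a.1, fun i => (a.2 i).eval (Sum.elim env fun j => g' (j + o))⟩ :
          Config D Q ar) ∈ AVal) →
      ((b = true → (∀ g' ∈ G, (∀ m, m < o → g' m = g m) →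
          (prenex φ).mat.Sat I (Sum.elim env fun j => g' (j + o))) → φ.Sat J env)
       ∧ (b = false → (∀ g' ∈ G, (∀ m, m < o → g' m = g m) →
          ¬ (prenex φ).mat.Sat I (Sum.elim env fun j => g' (j + o))) → ¬ φ.Sat J env))
  | _, .eq t s, b => by
    intro hb env o hlen hpre g hg hatoms
    have key : ∀ (g' : ℕ → D) (u : Term D _),
        (u.rename (Sum.inl : _ → _ ⊕ ℕ)).eval (Sum.elim env fun j => g' (j + o)) =
          u.eval env := by
      intro g' u
      rw [Term.eval_rename]
      rfl
    constructor
    · rintro rfl hsat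
      have h1 := hsat g hg (fun m _ => rfl)
      simp only [prenex, QF.Sat] at h1
      rw [key, key] at h1
      exact h1
    · rintro rfl hsat
      intro hS
      refine hsat g hg (fun m _ => rfl) ?_
      simp only [prenex, QF.Sat]
      rw [key, key]
      exact hS
  | _, .pred q ts, b => by
    intro hb env o hlen hpre g hg hatoms
    constructor
    · rintro rfl hsat
      have h1 := hsat g hg (fun m _ => rfl)
      simp only [prenex, QF.Sat] at h1
      have hkey : (fun i => ((ts i).rename (Sum.inl : _ → _ ⊕ ℕ)).eval
          (Sum.elim env fun j => g (j + o))) = fun i => (ts i).eval env := by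
        funext i
        rw [Term.eval_rename]
        rfl
      rw [hkey] at h1
      have hAV := hatoms ⟨q, fun i => (ts i).rename Sum.inl⟩
        (by simp [prenex, QF.atoms]) g hg (fun m _ => rfl)
      have hAV' : (⟨q, fun i => (ts i).eval env⟩ : Config D Q ar) ∈ AVal := by
        convert hAV using 2
        exact hkey.symm
      exact HJ q _ h1 hAV'
    · rintro rfl
      exact absurd hb (by simp [Fml.Polarity])
  | _, .not φ, b => by
    intro hb env o hlen hpre g hg hatoms
    have hlen' : o + (prenex φ).pre.length ≤ preg.length := by
      simpa [prenex] using hlen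
    have hpre' : ∀ (j) (hj : j < (prenex φ).pre.length) (h2 : o + j < preg.length),
        preg.get ⟨o + j, h2⟩ =
          (if (!b) then (prenex φ).pre.get ⟨j, hj⟩ else !(prenex φ).pre.get ⟨j, hj⟩) := by
      intro j hj h2
      have := hpre j (by simpa [prenex] using hj) h2
      simp only [prenex] at this
      rw [this]
      have hmap : ((prenex φ).pre.map (!·)).get ⟨j, by simpa using hj⟩ =
          !((prenex φ).pre.get ⟨j, hj⟩) := by simp
      rw [hmap]
      cases b <;> simp
    have hatoms' : ∀ a ∈ (prenex φ).mat.atoms, ∀ g' ∈ G, (∀ m, m < o → g' m = g m) →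
        (⟨a.1, fun i => (a.2 i).eval (Sum.elim env fun j => g' (j + o))⟩ :
          Config D Q ar) ∈ AVal := by
      intro a ha
      exact hatoms a (by simpa [prenex, QF.atoms] using ha)
    have IH := transfer HU HJ φ (!b) hb env o hlen' hpre' g hg hatoms'
    constructor
    · rintro rfl hsat
      show ¬ φ.Sat J env
      refine IH.2 (by simp) ?_
      intro g' hg' hag
      have := hsat g' hg' hag
      simpa [prenex, QF.Sat] using this
    · rintro rfl hsat
      intro hns
      refine hns (IH.1 (by simp) ?_)
      intro g' hg' hag
      have := hsat g' hg' hag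
      simp only [prenex, QF.Sat, not_not] at this
      exact this
  | _, .and φ ψ, b => by
    intro hb env o hlen hpre g hg hatoms
    obtain ⟨hb1, hb2⟩ := hb
    have hshift : ∀ (g' : ℕ → D),
        ((Sum.elim env fun j => g' (j + o)) ∘ (Sum.map id (· + (prenex φ).pre.length))) =
          (Sum.elim env fun j => g' (j + (o + (prenex φ).pre.length))) := by
      intro g'
      funext v
      cases v with
      | inl x => rfl
      | inr j =>
          show g' ((j + (prenex φ).pre.length) + o) = g' (j + (o + (prenex φ).pre.length))
          congr 1
          omega
    have hconv : ∀ (g' : ℕ → D),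
        QF.Sat I ((prenex ψ).mat.rename (Sum.map id (· + (prenex φ).pre.length)))
            (Sum.elim env fun j => g' (j + o)) ↔
          QF.Sat I (prenex ψ).mat
            (Sum.elim env fun j => g' (j + (o + (prenex φ).pre.length))) := by
      intro g'
      rw [QF.sat_rename, hshift g']
    have hlen1 : o + (prenex φ).pre.length ≤ preg.length := by
      simp only [prenex, List.length_append] at hlen
      omega
    have hlen2 : (o + (prenex φ).pre.length) + (prenex ψ).pre.length ≤ preg.length := by
      simp only [prenex, List.length_append] at hlen
      omega
    have hpre1 : ∀ (j) (hj : j < (prenex φ).pre.length) (h2 : o + j < preg.length),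
        preg.get ⟨o + j, h2⟩ =
          (if b then (prenex φ).pre.get ⟨j, hj⟩ else !(prenex φ).pre.get ⟨j, hj⟩) := by
      intro j hj h2
      have := hpre j (by simp only [prenex, List.length_append]; omega) h2
      rw [this]
      have : ((prenex φ).pre ++ (prenex ψ).pre).get
          ⟨j, by simp only [List.length_append]; omega⟩ = (prenex φ).pre.get ⟨j, hj⟩ := by
        simp [List.getElem_append_left, hj]
      simp only [prenex]
      rw [this]
    have hpre2 : ∀ (j) (hj : j < (prenex ψ).pre.length)
        (h2 : (o + (prenex φ).pre.length) + j < preg.length),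
        preg.get ⟨(o + (prenex φ).pre.length) + j, h2⟩ =
          (if b then (prenex ψ).pre.get ⟨j, hj⟩ else !(prenex ψ).pre.get ⟨j, hj⟩) := by
      intro j hj h2
      have hidx : (o + (prenex φ).pre.length) + j = o + ((prenex φ).pre.length + j) := by
        omega
      have := hpre ((prenex φ).pre.length + j)
        (by simp only [prenex, List.length_append]; omega) (by omega)
      have hget : ((prenex φ).pre ++ (prenex ψ).pre).get
          ⟨(prenex φ).pre.length + j, by simp only [List.length_append]; omega⟩ =
            (prenex ψ).pre.get ⟨j, hj⟩ := by
        simp [List.getElem_append_right]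
      simp only [prenex] at this
      rw [hget] at this
      rw [show (⟨(o + (prenex φ).pre.length) + j, h2⟩ : Fin preg.length) =
        ⟨o + ((prenex φ).pre.length + j), by omega⟩ from by simp [hidx]]
      exact this
    have hatoms1 : ∀ a ∈ (prenex φ).mat.atoms, ∀ g' ∈ G, (∀ m, m < o → g' m = g m) →
        (⟨a.1, fun i => (a.2 i).eval (Sum.elim env fun j => g' (j + o))⟩ :
          Config D Q ar) ∈ AVal := by
      intro a ha
      refine hatoms a ?_
      simp only [prenex, QF.atoms, List.mem_append]
      exact Or.inl ha
    have hatoms2 : ∀ (g₁ : ℕ → D), (∀ m, m < o → g₁ m = g m) →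
        ∀ a ∈ (prenex ψ).mat.atoms, ∀ g' ∈ G,
          (∀ m, m < o + (prenex φ).pre.length → g' m = g₁ m) →
        (⟨a.1, fun i => (a.2 i).eval
            (Sum.elim env fun j => g' (j + (o + (prenex φ).pre.length)))⟩ :
          Config D Q ar) ∈ AVal := by
      intro g₁ hg₁ a ha g' hg' hag
      have hmem : (⟨a.1, fun i => (a.2 i).rename (Sum.map id (· + (prenex φ).pre.length))⟩ :
          Σ q : Q, Fin (ar q) → Term D _) ∈ (prenex (Fml.and φ ψ)).mat.atoms := by
        simp only [prenex, QF.atoms, List.mem_append, QF.atoms_rename, List.mem_map]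
        exact Or.inr ⟨a, ha, rfl⟩
      have := hatoms _ hmem g' hg'
        (fun m hm => (hag m (by omega)).trans (hg₁ m hm))
      convert this using 2
      funext i
      rw [Term.eval_rename, hshift g']
    have IH1 := transfer HU HJ φ b hb1 env o hlen1 hpre1 g hg hatoms1
    constructor
    · rintro rfl hsat
      refine ⟨IH1.1 rfl ?_, ?_⟩
      · intro g' hg' hag
        have := hsat g' hg' hag
        simp only [prenex, QF.Sat] at this
        exact this.1
      · have IH2 := transfer HU HJ ψ true hb2 env (o + (prenex φ).pre.length)
          hlen2 hpre2 g hg (hatoms2 g (fun _ _ => rfl))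
        refine IH2.1 rfl ?_
        intro g' hg' hag
        have hag' : ∀ m, m < o → g' m = g m := fun m hm => hag m (by omega)
        have := hsat g' hg' hag'
        simp only [prenex, QF.Sat] at this
        exact (hconv g').1 this.2
    · rintro rfl hsat
      by_cases hA : ∃ g₁ ∈ G, (∀ m, m < o → g₁ m = g m) ∧
          QF.Sat I (prenex φ).mat (Sum.elim env fun j => g₁ (j + o))
      · obtain ⟨g₁, hg₁G, hg₁ag, hg₁A⟩ := hA
        rintro ⟨hS1, hS2⟩
        have IH2 := transfer HU HJ ψ false hb2 env (o + (prenex φ).pre.length)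
          hlen2 hpre2 g₁ hg₁G (hatoms2 g₁ hg₁ag)
        refine IH2.2 rfl ?_ hS2
        intro g' hg' hag
        have hagO : ∀ m, m < o → g' m = g m :=
          fun m hm => (hag m (by omega)).trans (hg₁ag m hm)
        have hA' : QF.Sat I (prenex φ).mat (Sum.elim env fun j => g' (j + o)) := by
          refine (QF.sat_congr _ ?_).2 hg₁A
          intro v hv
          cases v with
          | inl x => rfl
          | inr j =>
              have hj := prenex_fv_bound φ j hv
              show g' (j + o) = g₁ (j + o)
              exact hag (j + o) (by omega)
        have hns := hsat g' hg' hagO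
        intro hB
        refine hns ?_
        simp only [prenex, QF.Sat]
        exact ⟨hA', (hconv g').2 hB⟩
      · push_neg at hA
        intro hsatJ
        refine IH1.2 rfl ?_ hsatJ.1
        intro g' hg' hag
        exact hA g' hg' hag
  | _, .ex φ, b => by
    intro hb env o hlen hpre g hg hatoms
    have hlen' : (o + 1) + (prenex φ).pre.length ≤ preg.length := by
      simp only [prenex, List.length_cons] at hlen
      omega
    have hpre' : ∀ (j) (hj : j < (prenex φ).pre.length) (h2 : (o + 1) + j < preg.length),
        preg.get ⟨(o + 1) + j, h2⟩ =
          (if b then (prenex φ).pre.get ⟨j, hj⟩ else !(prenex φ).pre.get ⟨j, hj⟩) := by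
      intro j hj h2
      have hidx : (o + 1) + j = o + (j + 1) := by omega
      have := hpre (j + 1) (by simp only [prenex, List.length_cons]; omega) (by omega)
      have hget : (true :: (prenex φ).pre).get ⟨j + 1, by simp; omega⟩ =
          (prenex φ).pre.get ⟨j, hj⟩ := by simp
      simp only [prenex] at this
      rw [hget] at this
      rw [show (⟨(o + 1) + j, h2⟩ : Fin preg.length) =
        ⟨o + (j + 1), by omega⟩ from by simp [hidx]]
      exact this
    have hconv : ∀ (g' : ℕ → D) (d : D), g' o = d →
        (QF.Sat I ((prenex (Fml.ex φ)).mat) (Sum.elim env fun j => g' (j + o)) ↔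
          QF.Sat I (prenex φ).mat
            (Sum.elim (fun o? => Option.elim o? d env) fun j => g' (j + (o + 1)))) := by
      intro g' d hd
      simp only [prenex]
      rw [QF.sat_rename]
      apply iff_of_eq
      congr 1
      funext v
      match v with
      | .inl (some x) => rfl
      | .inl none =>
          show g' (0 + o) = d
          rw [Nat.zero_add, hd]
      | .inr j =>
          show g' ((j + 1) + o) = g' (j + (o + 1))
          congr 1
          omega
    have hatoms' : ∀ (g₁ : ℕ → D), (∀ m, m < o → g₁ m = g m) →
        ∀ a ∈ (prenex φ).mat.atoms, ∀ g' ∈ G, (∀ m, m < o + 1 → g' m = g₁ m) →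
        (⟨a.1, fun i => (a.2 i).eval
            (Sum.elim (fun o? => Option.elim o? (g₁ o) env) fun j => g' (j + (o + 1)))⟩ :
          Config D Q ar) ∈ AVal := by
      intro g₁ hg₁ a ha g' hg' hag
      have hmem : (⟨a.1, fun i => (a.2 i).rename (fun v =>
          match v with
          | Sum.inl (some x) => Sum.inl x
          | Sum.inl none => Sum.inr 0
          | Sum.inr j => Sum.inr (j + 1))⟩ :
          Σ q : Q, Fin (ar q) → Term D _) ∈ (prenex (Fml.ex φ)).mat.atoms := by
        simp only [prenex, QF.atoms_rename, List.mem_map]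
        exact ⟨a, ha, rfl⟩
      have := hatoms _ hmem g' hg'
        (fun m hm => (hag m (by omega)).trans (hg₁ m hm))
      convert this using 2
      funext i
      rw [Term.eval_rename]
      congr 1
      funext v
      match v with
      | .inl (some x) => rfl
      | .inl none =>
          show g₁ o = g' (0 + o)
          rw [Nat.zero_add]
          exact (hag o (by omega)).symm
      | .inr j =>
          show g' (j + (o + 1)) = g' ((j + 1) + o)
          congr 1
          omega
    constructor
    · rintro rfl hsat
      refine ⟨g o, ?_⟩
      have IH := transfer HU HJ φ true hb (fun o? => Option.elim o? (g o) env)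
        (o + 1) hlen' hpre' g hg (hatoms' g (fun _ _ => rfl))
      refine IH.1 rfl ?_
      intro g' hg' hag
      have := hsat g' hg' (fun m hm => hag m (by omega))
      exact (hconv g' (g o) (hag o (by omega))).1 this
    · rintro rfl hsat
      rintro ⟨d, hd⟩
      have hpos : o < preg.length := by
        simp only [prenex, List.length_cons] at hlen
        omega
      have hfalse : preg.get ⟨o, hpos⟩ = false := by
        have := hpre 0 (by simp [prenex]) (by omega)
        simpa [prenex] using this
      obtain ⟨g₁, hg₁G, hg₁ag, hg₁val⟩ := HU g hg o hpos hfalse d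
      have hatoms'' := hatoms' g₁ hg₁ag
      rw [hg₁val] at hatoms''
      have IH := transfer HU HJ φ false hb (fun o? => Option.elim o? d env)
        (o + 1) hlen' hpre' g₁ hg₁G hatoms''
      refine IH.2 rfl ?_ hd
      intro g' hg' hag
      have hagO : ∀ m, m < o → g' m = g m :=
        fun m hm => (hag m (by omega)).trans (hg₁ag m hm)
      have hns := hsat g' hg' hagO
      intro hS
      exact hns ((hconv g' d ((hag o (by omega)).trans hg₁val)).2 hS)

end Transfer

end FOADA


namespace FOADA

theorem prefix_get {β : Type} {l₁ l₂ : List β} (h : l₁ <+: l₂) (i : ℕ)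
    (h1 : i < l₁.length) (h2 : i < l₂.length) : l₂.get ⟨i, h2⟩ = l₁.get ⟨i, h1⟩ := by
  obtain ⟨t, rfl⟩ := h
  simp [List.getElem_append_left, h1]

namespace FOAA

section Stage

variable {Sig X D : Type} [Nonempty D] (A : FOAA Sig X D) (α : List Sig)

/-- The substitution instantiating a transition rule at an atom, named. -/
def sigSub {q : A.Q} (ts : Fin (A.ar q) → Term D ((ℕ × X) ⊕ ℕ)) (o : ℕ) :
    ((ℕ × X) ⊕ Fin (A.ar q)) ⊕ ℕ → Term D ((ℕ × X) ⊕ ℕ)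
  | Sum.inl (Sum.inl x) => Term.var (Sum.inl x)
  | Sum.inl (Sum.inr i) => ts i
  | Sum.inr jj => Term.var (Sum.inr (jj + o))

/-- The step of the inner fold of `stepPF`, named. -/
def stepF (j : ℕ) (a : Sig) (acc : PF D (ℕ × A.Q) (fun p => A.ar p.2) (ℕ × X))
    (atm : Σ q : ℕ × A.Q, Fin (A.ar q.2) → Term D ((ℕ × X) ⊕ ℕ)) :
    PF D (ℕ × A.Q) (fun p => A.ar p.2) (ℕ × X) :=
  ⟨acc.pre ++ (prenex (A.ruleF (j + 1) atm.1.2 a)).pre,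
   .and acc.mat (QF.imp (.pred atm.1 atm.2)
     ((prenex (A.ruleF (j + 1) atm.1.2 a)).mat.subst
       (A.sigSub atm.2 acc.pre.length)))⟩

theorem stepPF_eq (j : ℕ) (a : Sig) (Θ : PF D (ℕ × A.Q) (fun p => A.ar p.2) (ℕ × X)) :
    A.stepPF j a Θ = (Θ.mat.atoms.filter fun atm => atm.1.1 == j).foldl (A.stepF j a) Θ := by
  unfold FOAA.stepPF
  congr 1
  funext acc atm
  unfold stepF
  dsimp only
  refine congrArg (fun σ => (⟨acc.pre ++ (prenex (A.ruleF (j + 1) atm.1.2 a)).pre,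
    QF.and acc.mat (QF.imp (QF.pred atm.1 atm.2)
      ((prenex (A.ruleF (j + 1) atm.1.2 a)).mat.subst σ))⟩ :
      PF D (ℕ × A.Q) (fun p => A.ar p.2) (ℕ × X))) ?_
  funext v
  rcases v with (x | i) | jj <;> rfl

theorem foldl_pre_prefix (j : ℕ) (a : Sig) :
    ∀ (l : List (Σ q : ℕ × A.Q, Fin (A.ar q.2) → Term D ((ℕ × X) ⊕ ℕ)))
      (acc : PF D (ℕ × A.Q) (fun p => A.ar p.2) (ℕ × X)),
      acc.pre <+: (l.foldl (A.stepF j a) acc).pre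
  | [], acc => List.prefix_refl _
  | atm :: l, acc =>
      ((acc.pre.prefix_append _).trans (foldl_pre_prefix j a l (A.stepF j a acc atm)))

theorem foldl_isConj (j : ℕ) (a : Sig) :
    ∀ (l : List (Σ q : ℕ × A.Q, Fin (A.ar q.2) → Term D ((ℕ × X) ⊕ ℕ)))
      (acc : PF D (ℕ × A.Q) (fun p => A.ar p.2) (ℕ × X)) (c),
      QF.IsConj c acc.mat → QF.IsConj c (l.foldl (A.stepF j a) acc).mat
  | [], acc, c, h => h
  | atm :: l, acc, c, h => foldl_isConj j a l (A.stepF j a acc atm) c (QF.IsConj.left h)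

theorem ruleF_preds (i : ℕ) (q : A.Q) (a : Sig) :
    ∀ p ∈ (A.ruleF i q a).preds, p.1 = i := by
  intro p hp
  rw [FOAA.ruleF, Fml.preds_rename] at hp
  exact Fml.preds_stampF _ p hp

/-- `atm` has a well-formed instantiated transition-rule conjunct inside `Θ`. -/
def GoodConj (Θ : PF D (ℕ × A.Q) (fun p => A.ar p.2) (ℕ × X))
    (atm : Σ q : ℕ × A.Q, Fin (A.ar q.2) → Term D ((ℕ × X) ⊕ ℕ)) : Prop :=
  ∃ (hk : atm.1.1 < α.length) (o : ℕ),
    (∀ (i) (v), v ∈ (atm.2 i).vars → ∀ m, v = Sum.inr m → m < o) ∧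
    o + (prenex (A.ruleF (atm.1.1 + 1) atm.1.2 (α.get ⟨atm.1.1, hk⟩))).pre.length ≤
      Θ.pre.length ∧
    (∀ (jj) (hj : jj < (prenex (A.ruleF (atm.1.1 + 1) atm.1.2
        (α.get ⟨atm.1.1, hk⟩))).pre.length) (h2 : o + jj < Θ.pre.length),
      Θ.pre.get ⟨o + jj, h2⟩ =
        (prenex (A.ruleF (atm.1.1 + 1) atm.1.2 (α.get ⟨atm.1.1, hk⟩))).pre.get ⟨jj, hj⟩) ∧
    QF.IsConj (QF.imp (.pred atm.1 atm.2)
      ((prenex (A.ruleF (atm.1.1 + 1) atm.1.2 (α.get ⟨atm.1.1, hk⟩))).mat.subst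
        (A.sigSub atm.2 o))) Θ.mat

theorem GoodConj.mono {Θ Θ' : PF D (ℕ × A.Q) (fun p => A.ar p.2) (ℕ × X)}
    {atm} (hpre : Θ.pre <+: Θ'.pre)
    (hconj : ∀ c, QF.IsConj c Θ.mat → QF.IsConj c Θ'.mat)
    (h : GoodConj A α Θ atm) : GoodConj A α Θ' atm := by
  obtain ⟨hk, o, hv, hlen, hget, hc⟩ := h
  refine ⟨hk, o, hv, le_trans hlen hpre.length_le, ?_, hconj _ hc⟩
  intro jj hj h2
  rw [prefix_get hpre _ (by omega) h2]
  exact hget jj hj (by omega)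

theorem foldl_goodConj (j : ℕ) (hj : j < α.length) :
    ∀ (l : List (Σ q : ℕ × A.Q, Fin (A.ar q.2) → Term D ((ℕ × X) ⊕ ℕ)))
      (acc : PF D (ℕ × A.Q) (fun p => A.ar p.2) (ℕ × X)),
      (∀ atm ∈ l, atm.1.1 = j) →
      (∀ atm ∈ l, ∀ (i) (v), v ∈ (atm.2 i).vars → ∀ m, v = Sum.inr m →
        m < acc.pre.length) →
      ∀ atm ∈ l, GoodConj A α (l.foldl (A.stepF j (α.get ⟨j, hj⟩)) acc) atm
  | [], acc, _, _ => by simp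
  | atm₀ :: l, acc, hstamp, hvars => by
    intro atm hm
    rcases List.mem_cons.1 hm with rfl | hm'
    · refine GoodConj.mono A α (foldl_pre_prefix A j _ l _) (foldl_isConj A j _ l _) ?_
      have h0 : atm.1.1 = j := hstamp _ (List.mem_cons_self)
      subst h0
      refine ⟨hj, acc.pre.length, hvars _ (List.mem_cons_self), ?_, ?_, ?_⟩
      · simp [stepF]
      · intro jj hjj h2
        have h2' : acc.pre.length + jj < (acc.pre ++ (prenex (A.ruleF (atm.1.1 + 1)
            atm.1.2 (α.get ⟨atm.1.1, hj⟩))).pre).length := by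
          simp only [List.length_append]
          omega
        show (acc.pre ++ (prenex (A.ruleF (atm.1.1 + 1) atm.1.2
            (α.get ⟨atm.1.1, hj⟩))).pre).get ⟨acc.pre.length + jj, h2'⟩ = _
        simp [List.getElem_append_right]
      · exact QF.IsConj.right QF.IsConj.refl
    · refine foldl_goodConj j hj l (A.stepF j (α.get ⟨j, hj⟩) acc atm₀)
        (fun a' ha' => hstamp a' (List.mem_cons_of_mem _ ha')) ?_ atm hm'
      intro a' ha' i v hv m hvm
      have := hvars a' (List.mem_cons_of_mem _ ha') i v hv m hvm
      have hle : acc.pre.length ≤ (A.stepF j (α.get ⟨j, hj⟩) acc atm₀).pre.length := by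
        simp [stepF]
      omega

theorem foldl_fv (j : ℕ) (a : Sig) :
    ∀ (l : List (Σ q : ℕ × A.Q, Fin (A.ar q.2) → Term D ((ℕ × X) ⊕ ℕ)))
      (acc : PF D (ℕ × A.Q) (fun p => A.ar p.2) (ℕ × X)),
      (∀ v ∈ acc.mat.fv, ∀ m, v = Sum.inr m → m < acc.pre.length) →
      (∀ atm ∈ l, ∀ (i) (v), v ∈ (atm.2 i).vars → ∀ m, v = Sum.inr m →
        m < acc.pre.length) →
      ∀ v ∈ (l.foldl (A.stepF j a) acc).mat.fv, ∀ m, v = Sum.inr m →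
        m < (l.foldl (A.stepF j a) acc).pre.length
  | [], acc, hacc, _ => hacc
  | atm₀ :: l, acc, hacc, hvars => by
    have hlen' : (A.stepF j a acc atm₀).pre.length =
        acc.pre.length + (prenex (A.ruleF (j + 1) atm₀.1.2 a)).pre.length := by
      simp [stepF]
    refine foldl_fv j a l (A.stepF j a acc atm₀) ?_ ?_
    · intro v hv m hvm
      rcases hv with hv | hv
      · have := hacc v hv m hvm
        omega
      · -- v in fv of the new conjunct (an `imp`, i.e. not/and/not)
        rcases hv with hv | hv
        · -- fv of the pred atom
          simp only [QF.fv, Set.mem_iUnion] at hv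
          obtain ⟨i, hi⟩ := hv
          have := hvars atm₀ (List.mem_cons_self) i v hi m hvm
          omega
        · -- fv of m' (under a .not)
          obtain ⟨w, hw, hvw⟩ := QF.mem_fv_subst hv
          cases w with
          | inl w' =>
              cases w' with
              | inl x =>
                  subst hvm
                  simp [sigSub, Term.vars] at hvw
              | inr i =>
                  have hvw' : v ∈ (atm₀.2 i).vars := hvw
                  have := hvars atm₀ (List.mem_cons_self) i v hvw' m hvm
                  omega
          | inr jj =>
              have hjj := prenex_fv_bound (A.ruleF (j + 1) atm₀.1.2 a) jj hw
              subst hvm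
              simp only [sigSub, Term.vars, Set.mem_singleton_iff] at hvw
              have : m = jj + acc.pre.length := by
                simpa using hvw
              omega
    · intro a' ha' i v hv m hvm
      have := hvars a' (List.mem_cons_of_mem _ ha') i v hv m hvm
      omega

theorem foldl_atoms (j : ℕ) (a : Sig) :
    ∀ (l : List (Σ q : ℕ × A.Q, Fin (A.ar q.2) → Term D ((ℕ × X) ⊕ ℕ)))
      (acc : PF D (ℕ × A.Q) (fun p => A.ar p.2) (ℕ × X)),
      ∀ a' ∈ (l.foldl (A.stepF j a) acc).mat.atoms,
        a' ∈ acc.mat.atoms ∨ a' ∈ l ∨ a'.1.1 = j + 1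
  | [], acc => fun a' ha' => Or.inl ha'
  | atm₀ :: l, acc => by
    intro a' ha'
    rcases foldl_atoms j a l (A.stepF j a acc atm₀) a' ha' with h | h | h
    · -- in acc'.mat.atoms = acc.atoms ++ atoms of conjunct
      rcases List.mem_append.1 h with h | h
      · exact Or.inl h
      · rcases List.mem_append.1 h with h | h
        · -- the pred atom itself
          simp only [QF.atoms, List.mem_singleton] at h
          subst h
          exact Or.inr (Or.inl (List.mem_cons_self))
        · -- an atom of m'
          have h' : a' ∈ ((prenex (A.ruleF (j + 1) atm₀.1.2 a)).mat.subst
              (A.sigSub atm₀.2 acc.pre.length)).atoms := h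
          rw [QF.atoms_subst] at h'
          obtain ⟨a'', ha'', rfl⟩ := List.mem_map.1 h'
          refine Or.inr (Or.inr ?_)
          exact A.ruleF_preds (j + 1) atm₀.1.2 a _
            (prenex_atoms_preds (A.ruleF (j + 1) atm₀.1.2 a) a'' ha'')
    · exact Or.inr (Or.inl (List.mem_cons_of_mem _ h))
    · exact Or.inr (Or.inr h)

theorem thetaHatStage_zero :
    A.thetaHatStage α 0 = prenex ((stampF 0 A.init).rename fun v : Empty => v.elim) :=
  rfl

theorem thetaHatStage_succ (i : ℕ) (hi : i < α.length) :
    A.thetaHatStage α (i + 1) =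
      A.stepPF i (α.get ⟨i, hi⟩) (A.thetaHatStage α i) := by
  unfold FOAA.thetaHatStage
  rw [List.take_succ]
  have hfr : (List.finRange α.length)[i]? = some ⟨i, hi⟩ := by
    rw [List.getElem?_eq_getElem (by simpa using hi)]
    simp
  rw [hfr]
  simp

theorem stage_inv : ∀ i, i ≤ α.length →
    (∀ v ∈ (A.thetaHatStage α i).mat.fv, ∀ m, v = Sum.inr m →
      m < (A.thetaHatStage α i).pre.length) ∧
    (∀ atm ∈ (A.thetaHatStage α i).mat.atoms, atm.1.1 ≤ i) ∧
    (∀ atm ∈ (A.thetaHatStage α i).mat.atoms, atm.1.1 < i →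
      GoodConj A α (A.thetaHatStage α i) atm)
  | 0, _ => by
    rw [thetaHatStage_zero]
    refine ⟨?_, ?_, ?_⟩
    · intro v hv m hvm
      subst hvm
      exact prenex_fv_bound _ m hv
    · intro atm hatm
      have := prenex_atoms_preds _ atm hatm
      rw [Fml.preds_rename] at this
      have := Fml.preds_stampF _ _ this
      omega
    · intro atm _ h
      omega
  | i + 1, hi => by
    obtain ⟨ha, hb, hc⟩ := stage_inv i (by omega)
    have hi' : i < α.length := by omega
    rw [thetaHatStage_succ A α i hi', stepPF_eq]
    set Θ := A.thetaHatStage α i with hΘ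
    set l := (Θ.mat.atoms.filter fun atm => atm.1.1 == i) with hl
    have hlmem : ∀ atm ∈ l, atm ∈ Θ.mat.atoms ∧ atm.1.1 = i := by
      intro atm hm
      rw [hl, List.mem_filter] at hm
      exact ⟨hm.1, by simpa using hm.2⟩
    have hlvars : ∀ atm ∈ l, ∀ (i') (v), v ∈ (atm.2 i').vars → ∀ m, v = Sum.inr m →
        m < Θ.pre.length := by
      intro atm hm i' v hv m hvm
      exact ha v (QF.vars_atoms_subset_fv (hlmem atm hm).1 i' hv) m hvm
    refine ⟨?_, ?_, ?_⟩
    · exact A.foldl_fv i _ l Θ ha hlvars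
    · intro atm hatm
      rcases A.foldl_atoms i _ l Θ atm hatm with h | h | h
      · exact le_trans (hb atm h) (by omega)
      · have := (hlmem atm h).2
        omega
      · omega
    · intro atm hatm hlt
      rcases A.foldl_atoms i _ l Θ atm hatm with h | h | h
      · -- atm was already in Θ
        by_cases hcase : atm.1.1 = i
        · -- processed at this stage
          have hmem : atm ∈ l := by
            rw [hl, List.mem_filter]
            exact ⟨h, by simpa using hcase⟩
          exact A.foldl_goodConj α i hi' l Θ (fun a' ha' => (hlmem a' ha').2)
            hlvars atm hmem
        · have := hc atm h (by have := hb atm h; omega)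
          exact GoodConj.mono A α (A.foldl_pre_prefix i _ l Θ)
            (A.foldl_isConj i _ l Θ) this
      · have hmem := h
        exact A.foldl_goodConj α i hi' l Θ (fun a' ha' => (hlmem a' ha').2)
          hlvars atm hmem
      · omega

theorem thetaHatStage_prefix : ∀ (i i' : ℕ), i ≤ i' → i' ≤ α.length →
    (A.thetaHatStage α i).pre <+: (A.thetaHatStage α i').pre ∧
    (∀ c, QF.IsConj c (A.thetaHatStage α i).mat →
      QF.IsConj c (A.thetaHatStage α i').mat) := by
  intro i i' hle hle'
  induction i' with
  | zero =>
      have : i = 0 := by omega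
      subst this
      exact ⟨List.prefix_refl _, fun c hc => hc⟩
  | succ k ih =>
      rcases Nat.eq_or_lt_of_le hle with rfl | hlt
      · exact ⟨List.prefix_refl _, fun c hc => hc⟩
      · have hk : k < α.length := by omega
        obtain ⟨h1, h2⟩ := ih (by omega) (by omega)
        rw [thetaHatStage_succ A α k hk, stepPF_eq]
        constructor
        · exact h1.trans (A.foldl_pre_prefix k _ _ _)
        · intro c hc
          exact A.foldl_isConj k _ _ _ c (h2 c hc)

end Stage

section FinalFold

variable {Sig X D : Type} [Nonempty D] (A : FOAA Sig X D) (α : List Sig)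

/-- The step of the final fold of `thetaHat`. -/
def finalF (m : QF D (ℕ × A.Q) (fun p => A.ar p.2) ((ℕ × X) ⊕ ℕ))
    (atm : Σ q : ℕ × A.Q, Fin (A.ar q.2) → Term D ((ℕ × X) ⊕ ℕ)) :
    QF D (ℕ × A.Q) (fun p => A.ar p.2) ((ℕ × X) ⊕ ℕ) :=
  if atm.1.2 ∈ A.F then m
  else .and m (QF.imp (.pred atm.1 atm.2)
    (.not (.eq (Term.const (Classical.arbitrary D)) (Term.const (Classical.arbitrary D)))))

theorem thetaHat_eq :
    A.thetaHat α = ⟨(A.thetaHatN α).pre,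
      ((A.thetaHatN α).mat.atoms.filter fun atm => atm.1.1 == α.length).foldl
        (A.finalF) (A.thetaHatN α).mat⟩ :=
  rfl

theorem finalF_isConj :
    ∀ (l : List (Σ q : ℕ × A.Q, Fin (A.ar q.2) → Term D ((ℕ × X) ⊕ ℕ)))
      (m : QF D (ℕ × A.Q) (fun p => A.ar p.2) ((ℕ × X) ⊕ ℕ)) (c),
      QF.IsConj c m → QF.IsConj c (l.foldl A.finalF m)
  | [], m, c, h => h
  | atm :: l, m, c, h => by
      refine finalF_isConj l (A.finalF m atm) c ?_
      unfold finalF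
      split
      · exact h
      · exact QF.IsConj.left h

theorem finalF_atoms :
    ∀ (l : List (Σ q : ℕ × A.Q, Fin (A.ar q.2) → Term D ((ℕ × X) ⊕ ℕ)))
      (m : QF D (ℕ × A.Q) (fun p => A.ar p.2) ((ℕ × X) ⊕ ℕ)),
      ∀ a' ∈ (l.foldl A.finalF m).atoms, a' ∈ m.atoms ∨ a' ∈ l
  | [], m => fun a' ha' => Or.inl ha'
  | atm :: l, m => by
      intro a' ha'
      rcases finalF_atoms l (A.finalF m atm) a' ha' with h | h
      · unfold finalF at h
        split at h
        · exact Or.inl h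
        · rcases List.mem_append.1 h with h | h
          · exact Or.inl h
          · rcases List.mem_append.1 h with h | h
            · simp only [QF.atoms, List.mem_singleton] at h
              subst h
              exact Or.inr (List.mem_cons_self)
            · simp [QF.atoms] at h
      · exact Or.inr (List.mem_cons_of_mem _ h)

theorem finalF_conj :
    ∀ (l : List (Σ q : ℕ × A.Q, Fin (A.ar q.2) → Term D ((ℕ × X) ⊕ ℕ)))
      (m : QF D (ℕ × A.Q) (fun p => A.ar p.2) ((ℕ × X) ⊕ ℕ)),
      ∀ atm ∈ l, atm.1.2 ∉ A.F →
        QF.IsConj (QF.imp (.pred atm.1 atm.2)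
          (.not (.eq (Term.const (Classical.arbitrary D))
            (Term.const (Classical.arbitrary D))))) (l.foldl A.finalF m)
  | [], m => by simp
  | atm₀ :: l, m => by
      intro atm hm hF
      rcases List.mem_cons.1 hm with rfl | hm'
      · refine A.finalF_isConj l (A.finalF m atm) _ ?_
        unfold finalF
        rw [if_neg hF]
        exact QF.IsConj.right QF.IsConj.refl
      · exact finalF_conj l (A.finalF m atm₀) atm hm' hF

end FinalFold

end FOAA

end FOADA


namespace FOADA

theorem QF.sat_imp {D Q : Type} {ar : Q → ℕ} {V : Type} {I : Interp D Q ar}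
    {φ ψ : QF D Q ar V} {ν : V → D} :
    (QF.imp φ ψ).Sat I ν ↔ (φ.Sat I ν → ψ.Sat I ν) := by
  simp only [QF.imp, QF.Sat]
  tauto

end FOADA

namespace FOADA

/-- Lemma 3.2. -/
theorem statement_3 {Sig X D : Type} [Finite Sig] [Finite X] [Infinite D] [Nonempty D]
    (A : FOAA Sig X D) (α : List Sig) (ν : (ℕ × X) → D)
    (I : Interp D (ℕ × A.Q) (fun p => A.ar p.2)) (h : (A.thetaHat α).Sat I ν) :
    ∃ J : Interp D (ℕ × A.Q) (fun p => A.ar p.2), J.le I ∧ (A.upsilon α).Sat J ν := by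
  classical
  have hQ : quantSem (A.thetaHat α).pre 0
      (fun g => (A.thetaHat α).mat.Sat I (Sum.elim ν g))
      (fun _ => Classical.arbitrary D) := h
  set preg : List Bool := (A.thetaHat α).pre with hpreg
  set Mf : QF D (ℕ × A.Q) (fun p => A.ar p.2) ((ℕ × X) ⊕ ℕ) := (A.thetaHat α).mat with hMf
  set P : (ℕ → D) → Prop := fun g => Mf.Sat I (Sum.elim ν g) with hP
  set G : Set (ℕ → D) := playSet preg 0 P (fun _ => Classical.arbitrary D) with hGdef
  set AVal : Set (Config D (ℕ × A.Q) (fun p => A.ar p.2)) :=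
    {c | ∃ g ∈ G, ∃ atm ∈ Mf.atoms,
      (⟨atm.1, fun i => (atm.2 i).eval (Sum.elim ν g)⟩ :
        Config D (ℕ × A.Q) (fun p => A.ar p.2)) = c} with hAVal
  set J : Interp D (ℕ × A.Q) (fun p => A.ar p.2) :=
    fun p => {d | d ∈ I p ∧
      (⟨p, d⟩ : Config D (ℕ × A.Q) (fun p => A.ar p.2)) ∈ AVal} with hJdef
  have HU : ∀ g ∈ G, ∀ (k) (hk : k < preg.length), preg.get ⟨k, hk⟩ = false → ∀ d : D,
      ∃ g' ∈ G, (∀ m, m < k → g' m = g m) ∧ g' k = d := by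
    intro g hg k hk hfalse d
    obtain ⟨g'', hmem, hagree, hval⟩ :=
      playSet_univ_access preg 0 (fun _ => Classical.arbitrary D) hQ g hg k hk hfalse d
    refine ⟨g'', hmem, fun m hm => hagree m (by omega), ?_⟩
    rw [Nat.zero_add] at hval
    exact hval
  have HJ : ∀ (q : ℕ × A.Q) (d : Fin (A.ar q.2) → D), d ∈ I q →
      (⟨q, d⟩ : Config D (ℕ × A.Q) (fun p => A.ar p.2)) ∈ AVal → d ∈ J q :=
    fun q d h1 h2 => ⟨h1, h2⟩
  have hGsat : ∀ g' ∈ G, Mf.Sat I (Sum.elim ν g') :=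
    fun g' hg' => playSet_sat preg 0 (fun _ => Classical.arbitrary D) hQ g' hg'
  obtain ⟨g₀, hg₀⟩ := playSet_nonempty preg 0 (fun _ => Classical.arbitrary D) hQ
  have hinv := A.stage_inv α α.length le_rfl
  have hstagePre := A.thetaHatStage_prefix α 0 α.length (by omega) le_rfl
  -- conjuncts of the last stage persist in the final matrix
  have hconjN : ∀ c, QF.IsConj c (A.thetaHatStage α α.length).mat → QF.IsConj c Mf :=
    fun c hc => A.finalF_isConj _ _ c hc
  have hpregN : preg = (A.thetaHatStage α α.length).pre := rfl
  -- atoms of the final matrix come from the last stage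
  have hatomsN : ∀ a ∈ Mf.atoms, a ∈ (A.thetaHatStage α α.length).mat.atoms := by
    intro a ha
    rcases A.finalF_atoms _ _ a ha with h | h
    · exact h
    · exact (List.mem_filter.1 h).1
  refine ⟨J, fun p d hd => hd.1, ?_⟩
  -- helper to extract the witness structure from membership in J
  have extract : ∀ (k : ℕ) (q : A.Q) (d : Fin (A.ar q) → D), d ∈ J (k, q) →
      d ∈ I (k, q) ∧ ∃ g_d ∈ G,
        ∃ ts : Fin (A.ar q) → Term D ((ℕ × X) ⊕ ℕ),
          (⟨(k, q), ts⟩ : Σ p : ℕ × A.Q, Fin (A.ar p.2) → Term D ((ℕ × X) ⊕ ℕ)) ∈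
            Mf.atoms ∧ (fun i => (ts i).eval (Sum.elim ν g_d)) = d := by
    intro k q d hd
    obtain ⟨hdI, hdAV⟩ := hd
    obtain ⟨g_d, hg_dG, atm, hatmMf, heq⟩ := hdAV
    obtain ⟨p, ts⟩ := atm
    refine ⟨hdI, g_d, hg_dG, ?_⟩
    injection heq with h1 h2
    subst h1
    exact ⟨ts, hatmMf, eq_of_heq h2⟩
  rw [FOAA.upsilon, FOAA.theta]
  refine ⟨⟨?_, ?_⟩, ?_⟩
  · -- initial sentence
    have hb0 : (((stampF 0 A.init).rename fun v : Empty => v.elim :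
        Fml D (ℕ × A.Q) (fun p => A.ar p.2) (ℕ × X))).Polarity true :=
      Fml.polarity_rename _ _ _ (Fml.polarity_stampF _ _ A.init_pos)
    have hpren0 : prenex ((stampF 0 A.init).rename fun v : Empty => v.elim :
        Fml D (ℕ × A.Q) (fun p => A.ar p.2) (ℕ × X)) =
        A.thetaHatStage α 0 := rfl
    refine (transfer HU HJ _ true hb0 ν 0 ?_ ?_ g₀ hg₀ ?_).1 rfl ?_
    · rw [hpren0, Nat.zero_add, hpregN]
      exact hstagePre.1.length_le
    · intro j hj h2
      have hj0 : j < (A.thetaHatStage α 0).pre.length := by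
        rw [← hpren0]
        exact hj
      rw [if_pos rfl]
      have hthis := prefix_get (hpregN ▸ hstagePre.1) j hj0 (by omega)
      rw [show (⟨0 + j, h2⟩ : Fin preg.length) = ⟨j, by omega⟩ from
        Fin.ext (Nat.zero_add j)]
      exact hthis
    · intro a ha g' hg' _
      refine ⟨g', hg', a, ?_, rfl⟩
      rw [hpren0] at ha
      exact (hconjN _ (hstagePre.2 _ QF.IsConj.refl)).atoms_subset a ha
    · intro g' hg' _
      exact (hconjN _ (hstagePre.2 _ QF.IsConj.refl)).sat (hGsat g' hg')
  · -- transition steps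
    rw [Fml.sat_conj]
    intro ψ hψ
    obtain ⟨j, -, rfl⟩ := List.mem_map.1 hψ
    rw [FOAA.stepFml, Fml.sat_conj]
    intro χ hχ
    obtain ⟨q, -, rfl⟩ := List.mem_map.1 hχ
    rw [Fml.sat_allN]
    intro d
    rw [Fml.sat_imp]
    intro hpred
    have hd : d ∈ J (j.val, q) := hpred
    obtain ⟨hdI, g_d, hg_dG, ts, hatmMf, hts⟩ := extract j.val q d hd
    have hatmN := hatomsN _ hatmMf
    have hgc := hinv.2.2 _ hatmN j.isLt
    obtain ⟨hk, o, hvars, hlenG, hget, hconj⟩ := hgc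
    rw [show (⟨(⟨(j.val, q), ts⟩ : Σ p : ℕ × A.Q,
        Fin (A.ar p.2) → Term D ((ℕ × X) ⊕ ℕ)).1.1, hk⟩ : Fin α.length) = j from
      Fin.ext rfl] at hlenG hget hconj
    -- the tuple of the atom evaluates to `d` along any play agreeing below `o`
    have htup : ∀ g' ∈ G, (∀ m, m < o → g' m = g_d m) →
        (fun i => (ts i).eval (Sum.elim ν g')) = d := by
      intro g' hg' hag
      rw [← hts]
      funext i
      refine Term.eval_congr (ts i) ?_
      intro v hv
      cases v with
      | inl x => rfl
      | inr m =>
          have := hvars i _ hv m rfl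
          exact hag m this
    -- pointwise agreement of the substituted valuation
    have hval : ∀ g' ∈ G, (∀ m, m < o → g' m = g_d m) →
        ∀ u : Term D (((ℕ × X) ⊕ Fin (A.ar q)) ⊕ ℕ),
        (u.subst (A.sigSub ts o)).eval (Sum.elim ν g') =
        u.eval (Sum.elim (Sum.elim ν d) fun jj => g' (jj + o)) := by
      intro g' hg' hag u
      rw [Term.eval_subst]
      refine Term.eval_congr u ?_
      intro v _
      match v with
      | Sum.inl (Sum.inl x) => rfl
      | Sum.inl (Sum.inr i) =>
          show (ts i).eval (Sum.elim ν g') = d i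
          rw [← htup g' hg' hag]
      | Sum.inr jj => rfl

    refine (transfer HU HJ (A.ruleF (j.val + 1) q (α.get j)) true
      (Fml.polarity_rename _ _ _ (Fml.polarity_stampF _ _ (A.delta_pos q _)))
      (Sum.elim ν d) o ?_ ?_ g_d hg_dG ?_).1 rfl ?_
    · exact hlenG
    · intro jj hj h2
      rw [if_pos rfl]
      exact hget jj hj h2
    · intro a ha g' hg' hag
      refine ⟨g', hg', ⟨a.1, fun i => (a.2 i).subst (A.sigSub ts o)⟩, ?_, ?_⟩
      · refine (hconjN _ hconj).atoms_subset _ ?_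
        have hmm : (⟨a.1, fun i => (a.2 i).subst (A.sigSub ts o)⟩ : Σ p : ℕ × A.Q,
              Fin (A.ar p.2) → Term D ((ℕ × X) ⊕ ℕ)) ∈
            ((prenex (A.ruleF (j.val + 1) q (α.get j))).mat.subst
              (A.sigSub ts o)).atoms := by
          rw [QF.atoms_subst]
          exact List.mem_map.2 ⟨a, ha, rfl⟩
        exact List.mem_append.2 (Or.inr hmm)
      · exact congrArg (Sigma.mk a.1) (funext fun i => hval g' hg' hag (a.2 i))
    · intro g' hg' hag
      have hC := (hconjN _ hconj).sat (hGsat g' hg')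
      have hpredI : QF.Sat I (.pred (⟨(j.val, q), ts⟩ : Σ p : ℕ × A.Q,
          Fin (A.ar p.2) → Term D ((ℕ × X) ⊕ ℕ)).1 ts) (Sum.elim ν g') := by
        show (fun i => (ts i).eval (Sum.elim ν g')) ∈ I (j.val, q)
        rw [htup g' hg' hag]
        exact hdI
      have hm' := QF.sat_imp.1 hC hpredI
      rw [QF.sat_subst] at hm'
      refine (QF.sat_congr _ ?_).2 hm'
      intro v hv
      have hvv := (hval g' hg' hag (Term.var v)).symm
      simpa only [Term.subst, Term.eval] using hvv
  · -- final constraints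
    rw [FOAA.finalFml, Fml.sat_conj]
    intro χ hχ
    obtain ⟨q, -, rfl⟩ := List.mem_map.1 hχ
    by_cases hqF : q ∈ A.F
    · rw [if_pos hqF]
      exact Fml.sat_tt ν
    · rw [if_neg hqF]
      rw [Fml.sat_allN]
      intro d
      rw [Fml.sat_imp]
      intro hpred
      exfalso
      have hd : d ∈ J (α.length, q) := hpred
      obtain ⟨hdI, g_d, hg_dG, ts, hatmMf, hts⟩ := extract α.length q d hd
      have hatmN := hatomsN _ hatmMf
      have hfilter : (⟨(α.length, q), ts⟩ : Σ p : ℕ × A.Q,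
          Fin (A.ar p.2) → Term D ((ℕ × X) ⊕ ℕ)) ∈
          (A.thetaHatN α).mat.atoms.filter fun atm => atm.1.1 == α.length := by
        rw [List.mem_filter]
        exact ⟨hatmN, by simp⟩
      have hconjF := A.finalF_conj _ (A.thetaHatN α).mat _ hfilter hqF
      have hC := hconjF.sat (hGsat g_d hg_dG)
      have hpredI : QF.Sat I (.pred (⟨(α.length, q), ts⟩ : Σ p : ℕ × A.Q,
          Fin (A.ar p.2) → Term D ((ℕ × X) ⊕ ℕ)).1 ts) (Sum.elim ν g_d) := by
        show (fun i => (ts i).eval (Sum.elim ν g_d)) ∈ I (α.length, q)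
        rw [hts]
        exact hdI
      have := QF.sat_imp.1 hC hpredI
      exact this rfl

end FOADA
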